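/- arXiv:2212.06885 — 5 statements merged into one kernel-verified Lean document; each statement's English description precedes it below -/
import Mathlib

section
/- For fixed positive integers a, b, the polytope X_n(a+(b-1)(a-1), b) is a b-dilate of X_n(a,1), and hence Vol(X_n(a+(b-1)(a-1), b)) = b^n · Vol(X_n(a,1)). -/
open Finset MeasureTheory

/-- `f` is an x-parking function of length `n` for `x = (a,b,b,...,b)`:
a tuple of positive integers whose nondecreasing rearrangement `f ∘ σ`
satisfies `(f ∘ σ) i ≤ a + i*b` (0-indexed, i.e. `b_i ≤ x_1 + ⋯ + x_i`). -/
def IsXPF (n a b : ℕ) (f : Fin n → ℕ) : Prop :=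
  (∀ i, 1 ≤ f i) ∧ ∃ σ : Equiv.Perm (Fin n),
    Monotone (f ∘ σ) ∧ ∀ i : Fin n, f (σ i) ≤ a + (i : ℕ) * b

/-- The x-parking function polytope `X_n(a,b)`: convex hull in `ℝ^n`
of all x-parking functions for `x = (a,b,...,b)`. -/
def XPFP (n a b : ℕ) : Set (Fin n → ℝ) :=
  convexHull ℝ {x : Fin n → ℝ | ∃ f : Fin n → ℕ, IsXPF n a b f ∧ x = fun i => (f i : ℝ)}

lemma mem_XPFP_of_Q (n a : ℕ) (ha : 0 < a) :
    ∀ (m : ℕ) (x : Fin n → ℝ),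
      (univ.filter fun i => Int.fract (x i) ≠ 0).card ≤ m →
      (∀ i, 1 ≤ x i) →
      (∀ k : Fin n, (univ.filter fun i => (a : ℝ) + (k : ℕ) < x i).card + (k : ℕ) + 1 ≤ n) →
      x ∈ XPFP n a 1 := by
  intro m
  induction m with
  | zero =>
    intro x hm h1 hQ
    have hint : ∀ i, Int.fract (x i) = 0 := by
      intro i
      by_contra hi
      have hmem : i ∈ univ.filter fun i => Int.fract (x i) ≠ 0 := by simp [hi]
      have := Finset.card_pos.mpr ⟨i, hmem⟩
      omega
    have hfl : ∀ i, (1 : ℤ) ≤ ⌊x i⌋ := fun i => Int.le_floor.mpr (by exact_mod_cast h1 i)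
    set f : Fin n → ℕ := fun i => (⌊x i⌋).toNat with hf
    have hxf : ∀ i, x i = (f i : ℝ) := by
      intro i
      have h0 : x i = (⌊x i⌋ : ℝ) := by
        have h := Int.floor_add_fract (x i)
        rw [hint i] at h; linarith
      have h2 : ((f i : ℕ) : ℤ) = ⌊x i⌋ := Int.toNat_of_nonneg (by linarith [hfl i])
      rw [h0]
      exact_mod_cast congrArg (fun z : ℤ => (z : ℝ)) h2.symm
    have hPF : IsXPF n a 1 f := by
      refine ⟨fun i => ?_, Tuple.sort f, Tuple.monotone_sort f, fun k => ?_⟩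
      · have := hfl i; simp only [hf]; omega
      · by_contra hk
        push_neg at hk
        set σ := Tuple.sort f with hσ
        have hsub : (Finset.Ici k).map σ.toEmbedding ⊆
            univ.filter fun i => (a : ℝ) + (k : ℕ) < x i := by
          intro i hi
          rw [Finset.mem_map] at hi
          obtain ⟨j, hj, rfl⟩ := hi
          rw [Finset.mem_Ici] at hj
          have hmono : f (σ k) ≤ f (σ j) := Tuple.monotone_sort f hj
          simp only [mem_filter, mem_univ, true_and]
          rw [hxf]
          have hlt : a + (k : ℕ) < f (σ j) := by
            have : a + (k : ℕ) * 1 < f (σ k) := hk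
            omega
          exact_mod_cast hlt
        have hcard := Finset.card_le_card hsub
        rw [Finset.card_map, Fin.card_Ici] at hcard
        have := hQ k
        have := k.isLt
        omega
    exact subset_convexHull ℝ _ ⟨f, hPF, funext hxf⟩
  | succ m ih =>
    intro x hm h1 hQ
    by_cases hc : (univ.filter fun i => Int.fract (x i) ≠ 0).card ≤ m
    · exact ih x hc h1 hQ
    have hne : ∃ i₀, Int.fract (x i₀) ≠ 0 := by
      by_contra h
      push_neg at h
      have hempty : (univ.filter fun i => Int.fract (x i) ≠ 0) = ∅ := by
        ext i; simp [h i]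
      rw [hempty] at hc; simp at hc
    obtain ⟨i₀, hi₀⟩ := hne
    set θ := Int.fract (x i₀) with hθdef
    have hθ0 : 0 < θ := lt_of_le_of_ne (Int.fract_nonneg _) (Ne.symm hi₀)
    have hθ1 : θ < 1 := Int.fract_lt_one _
    set F := ⌊x i₀⌋ with hFdef
    have hxF : x i₀ = (F : ℝ) + θ := (Int.floor_add_fract (x i₀)).symm
    have hF1 : (1 : ℝ) ≤ (F : ℝ) := by
      exact_mod_cast (Int.le_floor.mpr (by exact_mod_cast h1 i₀) : (1 : ℤ) ≤ F)
    set xd := Function.update x i₀ ((F : ℝ)) with hxd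
    set xu := Function.update x i₀ ((F : ℝ) + 1) with hxu
    have hdi : ∀ i, i ≠ i₀ → xd i = x i := fun i hi => Function.update_of_ne hi _ _
    have hui : ∀ i, i ≠ i₀ → xu i = x i := fun i hi => Function.update_of_ne hi _ _
    have hdi₀ : xd i₀ = (F : ℝ) := Function.update_self _ _ _
    have hui₀ : xu i₀ = (F : ℝ) + 1 := Function.update_self _ _ _
    have hmem₀ : i₀ ∈ univ.filter fun i => Int.fract (x i) ≠ 0 := by simp [hi₀]; exact hi₀
    -- fract counts
    have hcount : ∀ y : Fin n → ℝ, (∀ i, i ≠ i₀ → y i = x i) → Int.fract (y i₀) = 0 →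
        (univ.filter fun i => Int.fract (y i) ≠ 0).card ≤ m := by
      intro y hy hy0
      have hsub : (univ.filter fun i => Int.fract (y i) ≠ 0) ⊆
          (univ.filter fun i => Int.fract (x i) ≠ 0).erase i₀ := by
        intro i hi
        simp only [mem_filter, mem_univ, true_and] at hi
        have hii : i ≠ i₀ := by rintro rfl; exact hi hy0
        rw [Finset.mem_erase]
        exact ⟨hii, by simp only [mem_filter, mem_univ, true_and]; rwa [hy i hii] at hi⟩
      have := Finset.card_le_card hsub
      rw [Finset.card_erase_of_mem hmem₀] at this
      omega
    have hfd : Int.fract (xd i₀) = 0 := by rw [hdi₀]; exact Int.fract_intCast F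
    have hfu : Int.fract (xu i₀) = 0 := by
      rw [hui₀, show ((F : ℝ) + 1) = ((F + 1 : ℤ) : ℝ) by push_cast; ring]
      exact Int.fract_intCast _
    -- memberships by IH
    have hd : xd ∈ XPFP n a 1 := by
      refine ih xd (hcount xd hdi hfd) (fun i => ?_) (fun k => ?_)
      · by_cases hii : i = i₀
        · rw [hii, hdi₀]; exact hF1
        · rw [hdi i hii]; exact h1 i
      · refine le_trans (Nat.add_le_add_right (Nat.add_le_add_right (Finset.card_le_card ?_) _) _) (hQ k)
        intro i hi
        simp only [mem_filter, mem_univ, true_and] at hi ⊢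
        by_cases hii : i = i₀
        · rw [hii, hdi₀] at hi
          rw [hii]
          calc (a : ℝ) + (k : ℕ) < (F : ℝ) := hi
            _ ≤ x i₀ := Int.floor_le _
        · rwa [hdi i hii] at hi
    have hu : xu ∈ XPFP n a 1 := by
      refine ih xu (hcount xu hui hfu) (fun i => ?_) (fun k => ?_)
      · by_cases hii : i = i₀
        · rw [hii, hui₀]; linarith
        · rw [hui i hii]; exact h1 i
      · refine le_trans (Nat.add_le_add_right (Nat.add_le_add_right (Finset.card_le_card ?_) _) _) (hQ k)
        intro i hi
        simp only [mem_filter, mem_univ, true_and] at hi ⊢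
        by_cases hii : i = i₀
        · rw [hii, hui₀] at hi
          rw [hii]
          have h2 : ((a : ℤ) + (k : ℕ)) ≤ F := by
            have h4 : ((a : ℤ) + (k : ℕ) : ℤ) < F + 1 := by exact_mod_cast hi
            omega
          have h3 : ((a : ℝ) + (k : ℕ)) ≤ (F : ℝ) := by exact_mod_cast h2
          rw [hxF]; linarith
        · rwa [hui i hii] at hi
    have hx : x = (1 - θ) • xd + θ • xu := by
      funext i
      simp only [Pi.add_apply, Pi.smul_apply, smul_eq_mul]
      by_cases hii : i = i₀
      · subst hii; rw [hdi₀, hui₀, hxF]; ring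
      · rw [hdi i hii, hui i hii]; ring
    rw [hx]
    exact (convex_convexHull ℝ _) hd hu (by linarith) (le_of_lt hθ0) (by ring)

/-- `X_n(a+(b-1)(a-1), b)` is a `b`-dilate of `X_n(a,1)`, hence
`Vol(X_n(a+(b-1)(a-1), b)) = b^n · Vol(X_n(a,1))`. -/
theorem stmt_11 (n a b : ℕ) (hn : 0 < n) (ha : 0 < a) (hb : 0 < b) :
    XPFP n (a + (b - 1) * (a - 1)) b =
      (fun x : Fin n → ℝ => fun i => (b : ℝ) * (x i - 1) + 1) '' XPFP n a 1 ∧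
    (volume (XPFP n (a + (b - 1) * (a - 1)) b)).toReal =
      (b : ℝ) ^ n * (volume (XPFP n a 1)).toReal := by
  have hA : a + (b - 1) * (a - 1) = b * (a - 1) + 1 := by
    obtain ⟨a', rfl⟩ : ∃ a', a = a' + 1 := ⟨a - 1, by omega⟩
    obtain ⟨b', rfl⟩ : ∃ b', b = b' + 1 := ⟨b - 1, by omega⟩
    simp [Nat.add_sub_cancel]
    ring
  have hb' : (0 : ℝ) < (b : ℝ) := by exact_mod_cast hb
  set φ : (Fin n → ℝ) →ᵃ[ℝ] (Fin n → ℝ) :=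
    AffineMap.homothety (fun _ => (1 : ℝ)) ((b : ℝ)) with hφdef
  have hφ : ∀ x : Fin n → ℝ, φ x = fun i => (b : ℝ) * (x i - 1) + 1 := by
    intro x
    funext i
    simp [hφdef, AffineMap.homothety_apply, Pi.smul_apply, smul_eq_mul]
  have hφfun : (fun x : Fin n → ℝ => fun i : Fin n => (b : ℝ) * (x i - 1) + 1) = ⇑φ := by
    funext x; exact (hφ x).symm
  -- forward inclusion
  have hfwd : ⇑φ '' XPFP n a 1 ⊆ XPFP n (a + (b - 1) * (a - 1)) b := by
    unfold XPFP
    rw [AffineMap.image_convexHull]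
    apply convexHull_mono
    rintro _ ⟨_, ⟨f, hf, rfl⟩, rfl⟩
    obtain ⟨hf1, σ, hmono, hbd⟩ := hf
    refine ⟨fun i => b * (f i - 1) + 1, ⟨fun i => Nat.le_add_left 1 _, σ, ?_, ?_⟩, ?_⟩
    · intro i j hij
      have := hmono hij
      simp only [Function.comp_apply] at this ⊢
      have h2 : f (σ i) - 1 ≤ f (σ j) - 1 := by omega
      exact Nat.add_le_add_right (Nat.mul_le_mul_left b h2) 1
    · intro i
      have h1 : f (σ i) - 1 ≤ (a - 1) + (i : ℕ) := by
        have := hbd i; omega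
      calc b * (f (σ i) - 1) + 1 ≤ b * ((a - 1) + (i : ℕ)) + 1 := by
            exact Nat.add_le_add_right (Nat.mul_le_mul_left b h1) 1
        _ = (b * (a - 1) + 1) + (i : ℕ) * b := by ring
        _ = (a + (b - 1) * (a - 1)) + (i : ℕ) * b := by rw [hA]
    · rw [hφ]
      funext i
      have : ((f i : ℝ) - 1) = ((f i - 1 : ℕ) : ℝ) := by
        rw [Nat.cast_sub (hf1 i)]; norm_num
      push_cast [this]
      ring
  -- backward inclusion
  have hbwd : XPFP n (a + (b - 1) * (a - 1)) b ⊆ ⇑φ '' XPFP n a 1 := by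
    have hconv : Convex ℝ (⇑φ '' XPFP n a 1) := by
      unfold XPFP
      rw [AffineMap.image_convexHull]
      exact convex_convexHull ℝ _
    refine convexHull_min ?_ hconv
    rintro _ ⟨g, hg, rfl⟩
    obtain ⟨hg1, σ, hmono, hbd⟩ := hg
    refine ⟨fun i => ((g i : ℝ) - 1) / (b : ℝ) + 1, ?_, ?_⟩
    · refine mem_XPFP_of_Q n a ha _ _ le_rfl (fun i => ?_) (fun k => ?_)
      · have : (0 : ℝ) ≤ ((g i : ℝ) - 1) / (b : ℝ) := by
          apply div_nonneg _ hb'.le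
          have := hg1 i
          have : (1 : ℝ) ≤ (g i : ℝ) := by exact_mod_cast this
          linarith
        linarith
      · have key : ∀ j : Fin n, (j : ℕ) ≤ (k : ℕ) →
            ((g (σ j) : ℝ) - 1) / (b : ℝ) + 1 ≤ (a : ℝ) + (k : ℕ) := by
          intro j hj
          have hbdj := hbd j
          rw [hA] at hbdj
          have h1 : (g (σ j) : ℝ) ≤ ((b * (a - 1) + 1 + (j : ℕ) * b : ℕ) : ℝ) := by
            exact_mod_cast hbdj
          have hcast : ((b * (a - 1) + 1 + (j : ℕ) * b : ℕ) : ℝ) =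
              (b : ℝ) * ((a : ℝ) - 1) + 1 + (j : ℕ) * (b : ℝ) := by
            push_cast [Nat.cast_sub ha]
            ring
          rw [hcast] at h1
          have hjk : ((j : ℕ) : ℝ) ≤ ((k : ℕ) : ℝ) := by exact_mod_cast hj
          have h2 : ((g (σ j) : ℝ) - 1) / (b : ℝ) ≤ (a : ℝ) - 1 + (j : ℕ) := by
            rw [div_le_iff₀ hb']
            calc (g (σ j) : ℝ) - 1 ≤ (b : ℝ) * ((a : ℝ) - 1) + (j : ℕ) * (b : ℝ) := by linarith
              _ = ((a : ℝ) - 1 + (j : ℕ)) * (b : ℝ) := by ring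
          linarith
        have hsub : (univ.filter fun i => (a : ℝ) + (k : ℕ) < ((g i : ℝ) - 1) / (b : ℝ) + 1) ⊆
            (Finset.Ioi k).map σ.toEmbedding := by
          intro i hi
          simp only [mem_filter, mem_univ, true_and] at hi
          rw [Finset.mem_map]
          refine ⟨σ.symm i, ?_, by simp⟩
          rw [Finset.mem_Ioi]
          by_contra hle
          push_neg at hle
          have hkey := key (σ.symm i) hle
          rw [Equiv.apply_symm_apply] at hkey
          linarith
        have hcard := Finset.card_le_card hsub
        rw [Finset.card_map, Fin.card_Ioi] at hcard
        have := k.isLt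
        omega
    · rw [hφ]
      funext i
      show (b : ℝ) * ((((g i : ℝ) - 1) / (b : ℝ) + 1) - 1) + 1 = (g i : ℝ)
      field_simp
      ring
  have part1 : XPFP n (a + (b - 1) * (a - 1)) b =
      (fun x : Fin n → ℝ => fun i => (b : ℝ) * (x i - 1) + 1) '' XPFP n a 1 := by
    rw [hφfun]
    exact Set.Subset.antisymm hbwd hfwd
  refine ⟨part1, ?_⟩
  rw [part1, hφfun, hφdef]
  rw [Measure.addHaar_image_homothety]
  rw [ENNReal.toReal_mul, ENNReal.toReal_ofReal (abs_nonneg _)]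
  congr 1
  rw [abs_of_nonneg (by positivity), Module.finrank_fin_fun]
end

section
/- For every positive integer n, Σ_{i=0}^n C(n,i)·((2i)!/(2^i·i!·(2i-1)))·(2n-1)^{n-i-1}·((2i-1)^2 + (2n-1)) = 0. -/
open Finset Nat

/-- For every positive integer `n`,
`∑_{i=0}^n C(n,i)·((2i)!/(2^i·i!·(2i-1)))·(2n-1)^{n-i-1}·((2i-1)^2 + (2n-1)) = 0`. -/
theorem stmt_16 (n : ℕ) (hn : 0 < n) :
    ∑ i ∈ Finset.range (n + 1),
      (n.choose i : ℝ) *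
        (((2 * i)! : ℝ) / (2 ^ i * (i ! : ℝ) * (2 * (i : ℝ) - 1))) *
        (2 * (n : ℝ) - 1) ^ ((n : ℤ) - (i : ℤ) - 1) *
        ((2 * (i : ℝ) - 1) ^ 2 + (2 * (n : ℝ) - 1)) = 0 := by
  have hn1 : (1:ℝ) ≤ (n:ℝ) := by exact_mod_cast hn
  have hx0 : (2 * (n : ℝ) - 1) ≠ 0 := by nlinarith
  set b : ℕ → ℝ := fun i => ((2 * i)! : ℝ) / (2 ^ i * (i ! : ℝ) * (2 * (i : ℝ) - 1)) with hb
  set T : ℕ → ℝ := fun i =>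
    -2 * i * (n.choose i : ℝ) * b i * (2 * (n : ℝ) - 1) ^ ((n : ℤ) - (i : ℤ)) with hT
  have hodd : ∀ i : ℕ, (2 * (i:ℝ) - 1) ≠ 0 := by
    intro i
    rcases Nat.eq_zero_or_pos i with h | h
    · simp [h]
    · have : (1:ℝ) ≤ (i:ℝ) := by exact_mod_cast h
      nlinarith
  have hbrec : ∀ i : ℕ, b (i+1) = (2 * (i:ℝ) - 1) * b i := by
    intro i
    have h2 : ((2*(i+1))! : ℝ) = (2*(i:ℝ)+2) * (2*(i:ℝ)+1) * ((2*i)! : ℝ) := by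
      have h : 2*(i+1) = (2*i+1)+1 := by ring
      rw [h, Nat.factorial_succ, Nat.factorial_succ]
      push_cast; ring
    have hfi : ((i)! : ℝ) ≠ 0 := by exact_mod_cast (Nat.factorial_pos i).ne'
    have h2i : ((2:ℝ)^i) ≠ 0 := by positivity
    have ho1 : (2*(i:ℝ)+1) ≠ 0 := by positivity
    have ho0 : (2*(i:ℝ)-1) ≠ 0 := hodd i
    have ho2 : (2*((i:ℝ)+1) - 1) ≠ 0 := by
      have := hodd (i+1); push_cast at this; convert this using 2
    simp only [hb, Nat.factorial_succ]
    push_cast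
    rw [h2]
    field_simp
    ring
  have key : ∀ i ∈ Finset.range (n+1),
      (n.choose i : ℝ) * b i *
        (2 * (n : ℝ) - 1) ^ ((n : ℤ) - (i : ℤ) - 1) *
        ((2 * (i : ℝ) - 1) ^ 2 + (2 * (n : ℝ) - 1)) = T (i+1) - T i := by
    intro i hi
    have hin : i ≤ n := Nat.lt_succ_iff.mp (Finset.mem_range.mp hi)
    have hc : ((i:ℝ)+1) * (n.choose (i+1) : ℝ) = ((n:ℝ) - (i:ℝ)) * (n.choose i : ℝ) := by
      have := Nat.choose_succ_right_eq n i
      have hcast : ((n - i : ℕ) : ℝ) = (n:ℝ) - (i:ℝ) := by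
        push_cast [hin]; ring
      calc ((i:ℝ)+1) * (n.choose (i+1) : ℝ)
          = ((n.choose (i+1) * (i+1) : ℕ) : ℝ) := by push_cast; ring
        _ = ((n.choose i * (n - i) : ℕ) : ℝ) := by rw [this]
        _ = ((n:ℝ) - (i:ℝ)) * (n.choose i : ℝ) := by push_cast [hin]; ring
    have hz1 : (2 * (n : ℝ) - 1) ^ ((n : ℤ) - ((i:ℕ)+1 : ℕ)) =
        (2 * (n : ℝ) - 1) ^ ((n : ℤ) - (i : ℤ) - 1) := by
      congr 1; push_cast; ring
    have hz2 : (2 * (n : ℝ) - 1) ^ ((n : ℤ) - (i : ℤ)) =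
        (2 * (n : ℝ) - 1) ^ ((n : ℤ) - (i : ℤ) - 1) * (2 * (n : ℝ) - 1) := by
      rw [← zpow_add_one₀ hx0]; congr 1; ring
    simp only [hT]
    rw [hz1, hz2, hbrec i]
    push_cast
    linear_combination (2 * (2*(i:ℝ)-1) * b i * (2 * (n : ℝ) - 1) ^ ((n : ℤ) - (i : ℤ) - 1)) * hc
  rw [Finset.sum_congr rfl key, Finset.sum_range_sub]
  simp [hT, Nat.choose_succ_self]
end

section
/- The formal power series g_b(x) = Σ_{n≥1} (bn)^{n-1} x^n / n! satisfies the functional equation g_b(x) = x·exp(b·g_b(x)). -/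
open Finset Nat

section PolyPart
open Polynomial




lemma pascal_alt (s : ℕ) (f : ℕ → ℚ) :
    ∑ j ∈ range (s+2), (-1:ℚ)^j * ((s+1).choose j) * f j
    = ∑ j ∈ range (s+1), (-1:ℚ)^j * (s.choose j) * (f j - f (j+1)) := by
  have hA : ∑ j ∈ range (s+1), (-1:ℚ)^j * (s.choose j) * f j
      = ∑ j ∈ range s, (-1:ℚ)^(j+1) * (s.choose (j+1)) * f (j+1) + f 0 := by
    rw [Finset.sum_range_succ' (fun j => (-1:ℚ)^j * (s.choose j) * f j)]
    simp
  have hC : ∑ j ∈ range (s+1), (-1:ℚ)^j * (s.choose (j+1)) * f (j+1)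
      = ∑ j ∈ range s, (-1:ℚ)^j * (s.choose (j+1)) * f (j+1) := by
    rw [Finset.sum_range_succ]
    simp [Nat.choose_succ_self]
  have hL : ∑ j ∈ range (s+2), (-1:ℚ)^j * ((s+1).choose j) * f j
      = ∑ j ∈ range (s+1), (-1:ℚ)^(j+1) * (((s.choose j : ℚ)) + (s.choose (j+1))) * f (j+1) + f 0 := by
    rw [Finset.sum_range_succ' (fun j => (-1:ℚ)^j * ((s+1).choose j) * f j)]
    simp [Nat.choose_succ_succ]
  rw [hL]
  have : ∀ j, (-1:ℚ)^(j+1) * (((s.choose j : ℚ)) + (s.choose (j+1))) * f (j+1)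
      = -((-1:ℚ)^j * (s.choose j) * f (j+1)) + -((-1:ℚ)^j * (s.choose (j+1)) * f (j+1)) := by
    intro j; ring
  simp only [this, Finset.sum_add_distrib, Finset.sum_neg_distrib, hC]
  have := hA
  simp only [mul_sub, Finset.sum_sub_distrib]
  have h2 : ∑ j ∈ range s, (-1:ℚ)^j * (s.choose (j+1)) * f (j+1)
      = f 0 - ∑ j ∈ range (s+1), (-1:ℚ)^j * (s.choose j) * f j := by
    rw [hA]
    have : ∀ j, (-1:ℚ)^(j+1) * (s.choose (j+1)) * f (j+1)
        = -((-1:ℚ)^j * (s.choose (j+1)) * f (j+1)) := by intro j; ring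
    simp only [this, Finset.sum_neg_distrib]
    ring
  rw [h2]
  ring



lemma altpow : ∀ (s : ℕ), ∀ m, m < s → ∀ c : ℚ,
    ∑ j ∈ range (s+1), (-1:ℚ)^j * (s.choose j) * (c + j)^m = 0 := by
  intro s
  induction s with
  | zero => intro m hm; omega
  | succ s ih =>
    intro m hm c
    rw [show s + 1 + 1 = s + 2 from rfl, pascal_alt s (fun j => (c + j)^m)]
    have hdiff : ∀ j : ℕ, (c + (j:ℚ))^m - (c + ((j+1:ℕ):ℚ))^m
        = ∑ i ∈ range m, -((m.choose i : ℚ) * (c + j)^i) := by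
      intro j
      have h1 : (c + ((j+1:ℕ):ℚ)) = (c + j) + 1 := by push_cast; ring
      have h2 : ((c + (j:ℚ)) + 1)^m
          = (∑ i ∈ range m, (c + (j:ℚ))^i * 1^(m-i) * (m.choose i)) + (c+(j:ℚ))^m := by
        rw [add_pow, Finset.sum_range_succ]; simp
      rw [h1, h2]
      have h3 : ∀ i ∈ range m, (c + (j:ℚ))^i * 1^(m-i) * (m.choose i)
          = -(-((m.choose i:ℚ) * (c+j)^i)) := fun i _ => by ring
      rw [Finset.sum_congr rfl h3, Finset.sum_neg_distrib, Finset.sum_neg_distrib]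
      ring
    have hstep : ∀ j ∈ range (s+1), (-1:ℚ)^j * (s.choose j) *
          ((fun j : ℕ => (c + (j:ℚ))^m) j - (fun j : ℕ => (c + (j:ℚ))^m) (j+1))
        = ∑ i ∈ range m, -((m.choose i:ℚ) * ((-1:ℚ)^j * (s.choose j) * (c+j)^i)) := by
      intro j _
      simp only []
      rw [hdiff j, Finset.mul_sum]
      exact Finset.sum_congr rfl fun i _ => by ring
    rw [Finset.sum_congr rfl hstep, Finset.sum_comm]
    apply Finset.sum_eq_zero
    intro i hi
    rw [Finset.sum_neg_distrib, ← Finset.mul_sum, ih i (by simp at hi; omega) c, mul_zero, neg_zero]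




lemma chmul (s j : ℕ) (hj : j ≤ s) :
    (((s+1).choose j : ℕ):ℚ) * (((s+1-j : ℕ)):ℚ) = ((s+1:ℕ):ℚ) * (s.choose j) := by
  have h1 : j ≤ s + 1 := le_succ_of_le hj
  have h2 : s + 1 - j = (s - j) + 1 := by omega
  rw [Nat.cast_choose ℚ h1, Nat.cast_choose ℚ hj, h2, Nat.factorial_succ (s-j),
    Nat.factorial_succ s]
  have hf1 : (j ! : ℚ) ≠ 0 := by positivity
  have hf2 : ((s-j)! : ℚ) ≠ 0 := by positivity
  have hf3 : (((s-j:ℕ):ℚ) + 1) ≠ 0 := by positivity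
  push_cast
  have hj' : (j:ℚ) ≤ s := by exact_mod_cast hj
  have hf4 : (s:ℚ) - j + 1 ≠ 0 := by nlinarith
  field_simp




noncomputable def aQ (j : ℕ) (x : ℚ) : ℚ := if j = 0 then 1 else x * (x + j) ^ (j - 1)

lemma dpow (c : ℚ) (m : ℕ) :
    derivative ((X + C c)^m) = Polynomial.C (m:ℚ) * (X + C c)^(m-1) := by
  rw [Polynomial.derivative_pow]
  simp [C_eq_natCast]

lemma negpow (n j : ℕ) (hj : j ≤ n) : (-1:ℚ)^(n-j) = (-1)^n * (-1)^j := by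
  have h2 : ((-1:ℚ)^j) * ((-1:ℚ)^j) = 1 := by
    rw [← pow_add]; exact Even.neg_one_pow ⟨j, rfl⟩
  calc (-1:ℚ)^(n-j) = (-1:ℚ)^(n-j) * ((-1:ℚ)^j * (-1:ℚ)^j) := by rw [h2, mul_one]
    _ = (-1:ℚ)^n * (-1)^j := by
        rw [← mul_assoc, ← pow_add, show n - j + j = n from by omega]

lemma abelPoly (x : ℚ) : ∀ s : ℕ,
    ∑ j ∈ range (s+1), Polynomial.C ((s.choose j : ℚ)) *
      (Polynomial.C (aQ j x) * (X + Polynomial.C ((s-j:ℕ):ℚ))^(s-j))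
    = (Polynomial.C x + X + Polynomial.C ((s:ℕ):ℚ))^s := by
  intro s
  induction s with
  | zero => simp [aQ]
  | succ s ih =>
    have hcomp := congrArg (fun p => p.comp (X + Polynomial.C (1:ℚ))) ih
    simp only [Polynomial.sum_comp, Polynomial.mul_comp, Polynomial.pow_comp,
      Polynomial.add_comp, Polynomial.C_comp, Polynomial.X_comp] at hcomp
    have hrhs : Polynomial.C x + (X + Polynomial.C (1:ℚ)) + Polynomial.C ((s:ℕ):ℚ)
        = Polynomial.C x + X + Polynomial.C ((s+1:ℕ):ℚ) := by
      rw [show ((s+1:ℕ):ℚ) = (1:ℚ) + (s:ℚ) from by push_cast; ring, Polynomial.C_add]; ring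
    rw [hrhs] at hcomp
    have hIH' : ∑ j ∈ range (s+1), Polynomial.C ((s.choose j : ℚ)) *
          (Polynomial.C (aQ j x) * (X + Polynomial.C ((s+1-j:ℕ):ℚ))^(s-j))
        = (Polynomial.C x + X + Polynomial.C ((s+1:ℕ):ℚ))^s := by
      rw [← hcomp]
      apply Finset.sum_congr rfl
      intro j hj
      simp only [mem_range] at hj
      have h4 : (X + Polynomial.C (1:ℚ)) + Polynomial.C ((s-j:ℕ):ℚ)
          = X + Polynomial.C ((s+1-j:ℕ):ℚ) := by
        rw [add_assoc, ← Polynomial.C_add]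
        congr 2
        rw [show s + 1 - j = (s - j) + 1 from by omega]; push_cast; ring
      rw [h4]
    -- derivative of LHS
    set L := ∑ j ∈ range (s+1+1), Polynomial.C (((s+1).choose j : ℚ)) *
      (Polynomial.C (aQ j x) * (X + Polynomial.C ((s+1-j:ℕ):ℚ))^(s+1-j)) with hL
    set R := (Polynomial.C x + X + Polynomial.C ((s+1:ℕ):ℚ))^(s+1) with hR
    have hdL : derivative L = Polynomial.C ((s+1:ℕ):ℚ) *
        ∑ j ∈ range (s+1), Polynomial.C ((s.choose j : ℚ)) *
          (Polynomial.C (aQ j x) * (X + Polynomial.C ((s+1-j:ℕ):ℚ))^(s-j)) := by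
      rw [hL, derivative_sum]
      rw [Finset.mul_sum]
      rw [Finset.sum_range_succ]
      have hlast : derivative (Polynomial.C (((s+1).choose (s+1) : ℚ)) *
          (Polynomial.C (aQ (s+1) x) * (X + Polynomial.C ((s+1-(s+1):ℕ):ℚ))^(s+1-(s+1)))) = 0 := by
        simp
      rw [hlast, add_zero]
      apply Finset.sum_congr rfl
      intro j hj
      simp only [mem_range] at hj
      rw [derivative_C_mul, derivative_C_mul, dpow]
      rw [show s + 1 - j - 1 = s - j from by omega]
      have := chmul s j (by omega)
      calc Polynomial.C (((s+1).choose j : ℚ)) * (Polynomial.C (aQ j x) *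
            (Polynomial.C (((s+1-j:ℕ)):ℚ) * (X + Polynomial.C ((s+1-j:ℕ):ℚ))^(s-j)))
          = Polynomial.C ((((s+1).choose j : ℚ)) * (((s+1-j:ℕ)):ℚ)) *
            (Polynomial.C (aQ j x) * (X + Polynomial.C ((s+1-j:ℕ):ℚ))^(s-j)) := by
            rw [Polynomial.C_mul]; ring
        _ = _ := by rw [this, Polynomial.C_mul]; ring
    rw [hIH'] at hdL
    have hdR : derivative R = Polynomial.C ((s+1:ℕ):ℚ) *
        (Polynomial.C x + X + Polynomial.C ((s+1:ℕ):ℚ))^s := by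
      rw [hR, Polynomial.derivative_pow]
      simp [C_eq_natCast]
    have hd0 : derivative (L - R) = 0 := by
      rw [derivative_sub, hdL, hdR, sub_self]
    have hC := Polynomial.eq_C_of_derivative_eq_zero hd0
    -- evaluation at y₀
    set y₀ : ℚ := -x - ((s+1:ℕ):ℚ) with hy₀
    have hevL : Polynomial.eval y₀ L = 0 := by
      rw [hL, Polynomial.eval_finset_sum]
      have hterm : ∀ j ∈ range (s+1+1),
          Polynomial.eval y₀ (Polynomial.C (((s+1).choose j : ℚ)) *
            (Polynomial.C (aQ j x) * (X + Polynomial.C ((s+1-j:ℕ):ℚ))^(s+1-j)))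
          = (x * (-1:ℚ)^(s+1)) * ((-1:ℚ)^j * (((s+1).choose j : ℚ)) * (x + j)^s) := by
        intro j hj
        simp only [mem_range] at hj
        simp only [Polynomial.eval_mul, Polynomial.eval_C, Polynomial.eval_pow,
          Polynomial.eval_add, Polynomial.eval_X]
        have hbase : y₀ + ((s+1-j:ℕ):ℚ) = -(x + j) := by
          rw [hy₀]
          have : ((s+1-j:ℕ):ℚ) = ((s+1:ℕ):ℚ) - j := by
            exact_mod_cast Nat.cast_sub (by omega)
          rw [this]; push_cast; try ring
        rw [hbase, neg_pow, negpow (s+1) j (by omega)]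
        rcases Nat.eq_zero_or_pos j with hj0 | hj0
        · subst hj0
          simp [aQ]
          try ring
        · rw [aQ, if_neg (by omega)]
          have hxp : (x + (j:ℚ))^(j-1) * (x + (j:ℚ))^(s+1-j) = (x + j)^s := by
            rw [← pow_add]; congr 1; omega
          calc ((s+1).choose j : ℚ) * (x * (x + j)^(j-1) * ((-1:ℚ)^(s+1) * (-1:ℚ)^j * (x+j)^(s+1-j)))
              = (x * (-1:ℚ)^(s+1)) * ((-1:ℚ)^j * (((s+1).choose j : ℚ)) *
                  ((x + (j:ℚ))^(j-1) * (x + (j:ℚ))^(s+1-j))) := by ring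
            _ = _ := by rw [hxp]
      rw [Finset.sum_congr rfl hterm, ← Finset.mul_sum]
      rw [altpow (s+1) s (by omega) x, mul_zero]
    have hevR : Polynomial.eval y₀ R = 0 := by
      rw [hR]
      simp only [Polynomial.eval_pow, Polynomial.eval_add, Polynomial.eval_X, Polynomial.eval_C]
      rw [hy₀]
      rw [show x + (-x - ((s+1:ℕ):ℚ)) + ((s+1:ℕ):ℚ) = 0 from by ring]
      exact zero_pow (by omega)
    have : (L - R).coeff 0 = 0 := by
      have := congrArg (Polynomial.eval y₀) hC
      rw [Polynomial.eval_sub, hevL, hevR, Polynomial.eval_C] at this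
      simpa using this.symm
    rw [this] at hC
    have : L = R := by
      have := hC
      rw [Polynomial.C_0] at this
      linear_combination this
    exact this


lemma abel_eval (s : ℕ) (x y : ℚ) :
    ∑ j ∈ range (s+1), (s.choose j : ℚ) * (aQ j x * (y + ((s-j:ℕ):ℚ))^(s-j))
    = (x + y + s)^s := by
  have := congrArg (Polynomial.eval y) (abelPoly x s)
  simpa [Polynomial.eval_finset_sum] using this

lemma cauchy (s : ℕ) (hs : 1 ≤ s) (x y : ℚ) :
    ∑ j ∈ range (s+1), (s.choose j : ℚ) * (aQ j x * aQ (s-j) y)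
    = (x + y) * (x + y + s)^(s-1) := by
  have hsplit : ∀ j ∈ range (s+1), (s.choose j : ℚ) * (aQ j x * aQ (s-j) y)
      = (s.choose j : ℚ) * (aQ j x * (y + ((s-j:ℕ):ℚ))^(s-j))
        - ((s.choose j : ℚ) * ((s-j:ℕ):ℚ)) * (aQ j x * (y + ((s-j:ℕ):ℚ))^(s-j-1)) := by
    intro j hj
    rcases Nat.eq_zero_or_pos (s-j) with h0 | h0
    · rw [h0]; simp [aQ]
    · have haQ : aQ (s-j) y = y * (y + ((s-j:ℕ):ℚ))^(s-j-1) := by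
        rw [aQ, if_neg (by omega)]
      have hpw : (y + ((s-j:ℕ):ℚ))^(s-j) = (y + ((s-j:ℕ):ℚ))^(s-j-1) * (y + ((s-j:ℕ):ℚ)) := by
        rw [← pow_succ]; congr 1; omega
      rw [haQ, hpw]; ring
  rw [Finset.sum_congr rfl hsplit, Finset.sum_sub_distrib, abel_eval]
  have hsecond : ∑ j ∈ range (s+1), ((s.choose j : ℚ) * ((s-j:ℕ):ℚ)) *
      (aQ j x * (y + ((s-j:ℕ):ℚ))^(s-j-1))
      = (s:ℚ) * (x + (y+1) + ((s-1:ℕ):ℚ))^(s-1) := by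
    rw [← abel_eval (s-1) x (y+1), Finset.mul_sum]
    rw [show s + 1 = (s-1+1) + 1 from by omega, Finset.sum_range_succ]
    have hz : ((s.choose (s-1+1) : ℚ) * ((s-(s-1+1):ℕ):ℚ)) *
        (aQ (s-1+1) x * (y + ((s-(s-1+1):ℕ):ℚ))^(s-(s-1+1)-1)) = 0 := by
      rw [show s - (s-1+1) = 0 from by omega]; simp
    rw [hz, add_zero]
    apply Finset.sum_congr rfl
    intro j hj
    simp only [mem_range] at hj
    have hj' : j ≤ s - 1 := by omega
    have h1 : (s.choose j : ℚ) * ((s-j:ℕ):ℚ) = (s:ℚ) * (((s-1).choose j : ℚ)) := by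
      have := chmul (s-1) j hj'
      rw [show s - 1 + 1 = s from by omega] at this
      exact this
    have h2 : (y + ((s-j:ℕ):ℚ))^(s-j-1) = ((y+1) + ((s-1-j:ℕ):ℚ))^(s-1-j) := by
      have : ((s-j:ℕ):ℚ) = ((s-1-j:ℕ):ℚ) + 1 := by
        rw [show s - j = (s-1-j) + 1 from by omega]; push_cast; ring
      rw [this, show s - j - 1 = s-1-j from by omega]; ring_nf
    rw [h1, h2]
    ring
  rw [hsecond]
  have hcast : ((s-1:ℕ):ℚ) = (s:ℚ) - 1 := by
    rw [Nat.cast_sub (by omega)]; norm_num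
  rw [hcast]
  have hpow : (x + y + (s:ℚ))^s = (x + y + s)^(s-1) * (x + y + s) := by
    rw [← pow_succ]; congr 1; omega
  rw [show x + (y+1) + ((s:ℚ) - 1) = x + y + s from by ring, hpow]
  ring


lemma keyId (s : ℕ) (hs : 1 ≤ s) (y : ℚ) :
    ∑ j ∈ range (s+1), (s.choose j : ℚ) * (if j = 0 then 0 else (j:ℚ)^(j-1)) * aQ (s-j) y
    = y * ((s:ℚ) - 1) * (y + s)^(s-2) + (y + s)^(s-1) := by
  set P : Polynomial ℚ := ∑ j ∈ range (s+1),
    Polynomial.C ((s.choose j : ℚ) * aQ (s-j) y) *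
      (if j = 0 then 1 else X * (X + Polynomial.C (j:ℚ))^(j-1)) with hP
  set Q : Polynomial ℚ := (X + Polynomial.C y) * (X + Polynomial.C (y + s))^(s-1) with hQ
  have hPQ : P = Q := by
    apply Polynomial.funext
    intro t
    rw [hP, hQ, Polynomial.eval_finset_sum]
    have hterm : ∀ j ∈ range (s+1),
        Polynomial.eval t (Polynomial.C ((s.choose j : ℚ) * aQ (s-j) y) *
          (if j = 0 then 1 else X * (X + Polynomial.C (j:ℚ))^(j-1)))
        = (s.choose j : ℚ) * (aQ j t * aQ (s-j) y) := by
      intro j hj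
      rcases Nat.eq_zero_or_pos j with h0 | h0
      · subst h0; simp [aQ]
      · have haQ : aQ j t = t * (t + (j:ℚ))^(j-1) := by rw [aQ, if_neg (by omega)]
        rw [if_neg (by omega), haQ]
        simp only [Polynomial.eval_mul, Polynomial.eval_C, Polynomial.eval_pow,
          Polynomial.eval_add, Polynomial.eval_X]
        ring
    rw [Finset.sum_congr rfl hterm, cauchy s hs t y]
    simp only [Polynomial.eval_mul, Polynomial.eval_pow, Polynomial.eval_add,
      Polynomial.eval_X, Polynomial.eval_C]
    ring
  have hcoeffP : P.coeff 1 = ∑ j ∈ range (s+1),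
      (s.choose j : ℚ) * (if j = 0 then 0 else (j:ℚ)^(j-1)) * aQ (s-j) y := by
    rw [hP, Polynomial.finset_sum_coeff]
    apply Finset.sum_congr rfl
    intro j hj
    rcases Nat.eq_zero_or_pos j with h0 | h0
    · subst h0; simp
    · rw [if_neg (by omega), if_neg (by omega)]
      rw [Polynomial.coeff_C_mul]
      rw [show (1:ℕ) = 0 + 1 from rfl, Polynomial.coeff_X_mul]
      rw [Polynomial.coeff_X_add_C_pow]
      simp only [Nat.sub_zero, Nat.choose_zero_right, Nat.cast_one, mul_one]
      ring
  have hcoeffQ : Q.coeff 1 = y * ((s:ℚ) - 1) * (y + s)^(s-2) + (y + s)^(s-1) := by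
    rw [hQ, Polynomial.coeff_mul]
    rw [Finset.Nat.sum_antidiagonal_eq_sum_range_succ_mk]
    rw [Finset.sum_range_succ, Finset.sum_range_succ, Finset.sum_range_zero]
    simp only [Polynomial.coeff_add, Polynomial.coeff_X_zero, Polynomial.coeff_X_one,
      Polynomial.coeff_C_zero, Polynomial.coeff_C, Polynomial.coeff_X_add_C_pow]
    norm_num
    have h2 : s - 1 - 1 = s - 2 := by omega
    have hc : ((s-1:ℕ):ℚ) = (s:ℚ) - 1 := by rw [Nat.cast_sub (by omega)]; norm_num
    rw [h2, hc]
    ring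
  rw [← hcoeffP, hPQ, hcoeffQ]


end PolyPart

section PSPart
open PowerSeries

noncomputable def gS (b : ℕ) : PowerSeries ℚ :=
  PowerSeries.mk fun m => if m = 0 then 0 else ((b : ℚ) * m) ^ (m - 1) / (m ! : ℚ)

lemma coeff_gS (b m : ℕ) : PowerSeries.coeff (R := ℚ) m (gS b)
    = if m = 0 then 0 else ((b : ℚ) * m) ^ (m - 1) / (m ! : ℚ) := by
  simp [gS]

lemma stepId (k s : ℕ) (hk : 1 ≤ k) :
    (k:ℚ) * (((s+1:ℕ):ℚ) - 1) * ((k:ℚ) + ((s+1:ℕ):ℚ))^(s+1-2) + ((k:ℚ)+((s+1:ℕ):ℚ))^(s+1-1)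
    = ((s+1:ℕ):ℚ) * aQ s ((k:ℚ)+1) := by
  rcases Nat.eq_zero_or_pos s with h0 | h0
  · subst h0; simp [aQ]
  · rw [aQ, if_neg (by omega)]
    have e1 : s + 1 - 2 = s - 1 := by omega
    have e2 : s + 1 - 1 = s := by omega
    rw [e1, e2]
    have e3 : ((k:ℚ) + ((s+1:ℕ):ℚ))^s = ((k:ℚ) + ((s+1:ℕ):ℚ))^(s-1) * ((k:ℚ) + ((s+1:ℕ):ℚ)) := by
      rw [← pow_succ]; congr 1; omega
    have e4 : ((k:ℚ)+1 + (s:ℚ)) = ((k:ℚ) + ((s+1:ℕ):ℚ)) := by push_cast; ring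
    rw [e3, e4]
    push_cast
    ring

lemma GK (b : ℕ) : ∀ k : ℕ, 1 ≤ k → ∀ n : ℕ,
    PowerSeries.coeff (R := ℚ) n ((gS b)^k)
    = if n < k then 0 else (b:ℚ)^(n-k) * aQ (n-k) (k:ℚ) / (((n-k)! : ℕ):ℚ) := by
  intro k
  induction k with
  | zero => omega
  | succ k ih =>
    intro _ n
    rcases Nat.eq_zero_or_pos k with hk0 | hk1
    · subst hk0
      rw [pow_one, coeff_gS]
      simp only [Nat.zero_add, Nat.cast_one]
      rcases Nat.eq_zero_or_pos n with h0 | h0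
      · subst h0; simp
      · rw [if_neg (by omega), if_neg (by omega)]
        rcases Nat.eq_or_lt_of_le h0 with h1 | h1
        · rw [← h1]; simp [aQ]
        · have haQ : aQ (n-1) (1:ℚ) = (1 + ((n-1:ℕ):ℚ))^(n-1-1) := by
            rw [aQ, if_neg (by omega)]; ring
          have hc : (1:ℚ) + ((n-1:ℕ):ℚ) = (n:ℚ) := by
            rw [Nat.cast_sub (by omega)]; ring
          rw [haQ, hc]
          have hfac : ((n ! : ℕ):ℚ) = (n:ℚ) * (((n-1)! : ℕ):ℚ) := by
            rw [show n = (n-1)+1 from by omega, Nat.factorial_succ]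
            push_cast
            ring
          have hpow : ((b:ℚ) * n)^(n-1) = (b:ℚ)^(n-1) * (n:ℚ)^(n-1) := mul_pow _ _ _
          have hpow2 : (n:ℚ)^(n-1) = (n:ℚ)^(n-1-1) * n := by
            rw [← pow_succ]; congr 1; omega
          rw [hpow, hpow2, hfac]
          have hn : (n:ℚ) ≠ 0 := by positivity
          have hf : (((n-1)! : ℕ):ℚ) ≠ 0 := by positivity
          field_simp
    · rw [pow_succ, mul_comm ((gS b)^k) (gS b), PowerSeries.coeff_mul,
        Finset.Nat.sum_antidiagonal_eq_sum_range_succ_mk]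
      simp only [ih hk1, coeff_gS]
      rcases Nat.lt_or_ge n (k+1) with hn | hn
      · rw [if_pos hn]
        apply Finset.sum_eq_zero
        intro j hj
        simp only [mem_range] at hj
        rcases Nat.eq_zero_or_pos j with h0 | h0
        · subst h0; simp
        · rw [if_neg (by omega), if_pos (by omega), mul_zero]
      · rw [if_neg (by omega)]
        set s := n - (k+1) with hs
        have hzero : ∀ j ∈ range (n+1), j ∉ range (s+2) →
            (if j = 0 then 0 else ((b:ℚ)*j)^(j-1)/((j ! : ℕ):ℚ)) *
              (if n - j < k then 0 else (b:ℚ)^(n-j-k) * aQ (n-j-k) (k:ℚ) / (((n-j-k)! : ℕ):ℚ)) = 0 := by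
          intro j hj hj2
          simp only [mem_range] at hj hj2
          rw [if_pos (show n - j < k from by omega), mul_zero]
        rw [← Finset.sum_subset (Finset.range_subset_range.2 (by omega)) hzero]
        rw [Finset.sum_range_succ' (fun j =>
          (if j = 0 then 0 else ((b:ℚ)*j)^(j-1)/((j ! : ℕ):ℚ)) *
            (if n - j < k then 0 else (b:ℚ)^(n-j-k) * aQ (n-j-k) (k:ℚ) / (((n-j-k)! : ℕ):ℚ)))]
        rw [if_pos rfl, zero_mul, add_zero]
        have hterm : ∀ j ∈ range (s+1),
            (if j + 1 = 0 then (0:ℚ) else ((b:ℚ)*((j+1:ℕ):ℚ))^(j+1-1)/((((j+1)! : ℕ)):ℚ)) *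
              (if n - (j+1) < k then 0 else (b:ℚ)^(n-(j+1)-k) * aQ (n-(j+1)-k) (k:ℚ) / (((n-(j+1)-k)! : ℕ):ℚ))
            = ((b:ℚ)^s / ((((s+1)! : ℕ)):ℚ)) *
              (((s+1).choose (j+1) : ℚ) * (if (j+1) = 0 then 0 else ((j+1:ℕ):ℚ)^(j+1-1)) * aQ ((s+1)-(j+1)) (k:ℚ)) := by
          intro j hj
          simp only [mem_range] at hj
          rw [if_neg (Nat.succ_ne_zero j), if_neg (show ¬(n - (j+1) < k) from by omega),
            if_neg (Nat.succ_ne_zero j)]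
          have e1 : n - (j+1) - k = s - j := by omega
          have e2 : (s+1) - (j+1) = s - j := by omega
          rw [e1, e2]
          have eb : (b:ℚ)^j * (b:ℚ)^(s-j) = (b:ℚ)^s := by rw [← pow_add]; congr 1; omega
          have e3 : ((b:ℚ)*((j+1:ℕ):ℚ))^(j+1-1) = (b:ℚ)^j * ((j+1:ℕ):ℚ)^(j+1-1) := by
            rw [mul_pow, show j+1-1 = j from rfl]
          have hC : ((s+1).choose (j+1) : ℚ)
              = ((((s+1)! : ℕ)):ℚ) / (((((j+1)! : ℕ)):ℚ) * ((((s-j)! : ℕ)):ℚ)) := by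
            rw [Nat.cast_choose ℚ (show j+1 ≤ s+1 by omega),
              show s+1-(j+1) = s - j from by omega]
          rw [e3, hC, ← eb]
          have h1 : ((((j+1)! : ℕ)):ℚ) ≠ 0 := by positivity
          have h2 : ((((s-j)! : ℕ)):ℚ) ≠ 0 := by positivity
          have h3 : ((((s+1)! : ℕ)):ℚ) ≠ 0 := by positivity
          field_simp
        rw [Finset.sum_congr rfl hterm, ← Finset.mul_sum]
        have hkey := keyId (s+1) (by omega) (k:ℚ)
        rw [Finset.sum_range_succ' (fun i =>
          ((s+1).choose i : ℚ) * (if i = 0 then 0 else (i:ℚ)^(i-1)) * aQ ((s+1)-i) (k:ℚ))] at hkey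
        rw [if_pos rfl, mul_zero, zero_mul, add_zero] at hkey
        rw [hkey, stepId k s hk1]
        have hfs : (((s+1)! : ℕ):ℚ) = ((s+1:ℕ):ℚ) * ((s ! : ℕ):ℚ) := by
          rw [Nat.factorial_succ]; push_cast; ring
        have hck : ((k+1:ℕ):ℚ) = (k:ℚ)+1 := by push_cast; ring
        rw [hfs, hck]
        have h1 : ((s+1:ℕ):ℚ) ≠ 0 := by positivity
        have h2 : ((s ! : ℕ):ℚ) ≠ 0 := by positivity
        field_simp


lemma finalId (n : ℕ) (hn : 1 ≤ n) :
    ∑ k ∈ range (n+1), (if k = 0 then 0 else (n.choose k : ℚ) * aQ (n-k) (k:ℚ))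
    = ((n+1:ℕ):ℚ)^(n-1) := by
  obtain ⟨m, rfl⟩ : ∃ m, n = m + 1 := ⟨n-1, by omega⟩
  rw [Finset.sum_range_succ]
  have hlast : (if m+1 = 0 then (0:ℚ) else ((m+1).choose (m+1) : ℚ) * aQ ((m+1)-(m+1)) ((m+1:ℕ):ℚ)) = 1 := by
    rw [if_neg (by omega), Nat.choose_self, Nat.sub_self]
    simp [aQ]
  rw [hlast]
  have hterm : ∀ k ∈ range (m+1),
      (if k = 0 then 0 else ((m+1).choose k : ℚ) * aQ ((m+1)-k) (k:ℚ))
      = (if k = 0 then 0 else ((m+1:ℕ):ℚ) * ((m.choose (k-1)) : ℚ) * ((m+1:ℕ):ℚ)^(m-k)) := by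
    intro k hk
    simp only [mem_range] at hk
    rcases Nat.eq_zero_or_pos k with h0 | h0
    · subst h0; simp
    · rw [if_neg (by omega), if_neg (by omega)]
      have haQ : aQ ((m+1)-k) (k:ℚ) = (k:ℚ) * ((k:ℚ) + (((m+1)-k:ℕ):ℚ))^((m+1)-k-1) := by
        rw [aQ, if_neg (by omega)]
      have hc : (k:ℚ) + (((m+1)-k:ℕ):ℚ) = ((m+1:ℕ):ℚ) := by
        rw [Nat.cast_sub (by omega)]; ring
      have he : (m+1)-k-1 = m-k := by omega
      rw [haQ, hc, he]
      have hck : (((m+1).choose k : ℕ):ℚ) * (k:ℚ) = ((m+1:ℕ):ℚ) * ((m.choose (k-1) : ℕ):ℚ) := by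
        have h := Nat.add_one_mul_choose_eq m (k-1)
        rw [show k - 1 + 1 = k from by omega] at h
        exact_mod_cast h.symm
      calc ((m+1).choose k : ℚ) * ((k:ℚ) * ((m+1:ℕ):ℚ)^(m-k))
          = ((((m+1).choose k : ℕ):ℚ) * (k:ℚ)) * ((m+1:ℕ):ℚ)^(m-k) := by push_cast; ring
        _ = ((m+1:ℕ):ℚ) * ((m.choose (k-1)) : ℚ) * ((m+1:ℕ):ℚ)^(m-k) := by rw [hck]
  rw [Finset.sum_congr rfl hterm]
  rw [Finset.sum_range_succ' (fun k =>
    (if k = 0 then (0:ℚ) else ((m+1:ℕ):ℚ) * ((m.choose (k-1)) : ℚ) * ((m+1:ℕ):ℚ)^(m-k)))]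
  rw [if_pos rfl, add_zero]
  have hterm2 : ∀ j ∈ range m,
      (if j+1 = 0 then (0:ℚ) else ((m+1:ℕ):ℚ) * ((m.choose (j+1-1)) : ℚ) * ((m+1:ℕ):ℚ)^(m-(j+1)))
      = (1:ℚ)^(j) * ((m+1:ℕ):ℚ)^(m-j) * (m.choose j : ℚ) := by
    intro j hj
    simp only [mem_range] at hj
    rw [if_neg (Nat.succ_ne_zero j), show j+1-1 = j from rfl]
    have hp : ((m+1:ℕ):ℚ)^(m-j) = ((m+1:ℕ):ℚ)^(m-(j+1)) * ((m+1:ℕ):ℚ) := by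
      rw [← pow_succ]; congr 1; omega
    rw [hp]
    ring
  rw [Finset.sum_congr rfl hterm2]
  have hbin := add_pow (1:ℚ) ((m+1:ℕ):ℚ) m
  rw [Finset.sum_range_succ] at hbin
  have hlast2 : (1:ℚ)^m * ((m+1:ℕ):ℚ)^(m-m) * (m.choose m : ℚ) = 1 := by
    simp
  rw [hlast2] at hbin
  have : ∑ j ∈ range m, (1:ℚ)^j * ((m+1:ℕ):ℚ)^(m-j) * (m.choose j : ℚ)
      = (1 + ((m+1:ℕ):ℚ))^m - 1 := by rw [hbin]; ring
  rw [this]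
  have : (1:ℚ) + ((m+1:ℕ):ℚ) = ((m+1+1:ℕ):ℚ) := by push_cast; ring
  rw [this, show m+1-1 = m from rfl]
  ring


/-- The formal power series `g_b(x) = ∑_{n ≥ 1} (bn)^{n-1} x^n / n!` satisfies
`g_b = x · exp(b·g_b)`, where `exp(b·g_b) = ∑_k (b·g_b)^k / k!` (its `m`-th
coefficient is the finite sum `∑_{k=0}^m b^k/k! · [x^m] g_b^k`). -/
theorem stmt_17 (b : ℕ) (hb : 0 < b) :
    let g : PowerSeries ℚ :=
      PowerSeries.mk fun m => if m = 0 then 0 else ((b : ℚ) * m) ^ (m - 1) / (m ! : ℚ)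
    let expbg : PowerSeries ℚ :=
      PowerSeries.mk fun m =>
        ∑ k ∈ Finset.range (m + 1), (b : ℚ) ^ k / (k ! : ℚ) * PowerSeries.coeff (R := ℚ) m (g ^ k)
    g = PowerSeries.X * expbg := by
  intro g expbg
  have hg : g = gS b := rfl
  have hE : expbg = PowerSeries.mk (fun m =>
      ∑ k ∈ Finset.range (m + 1), (b : ℚ) ^ k / (k ! : ℚ) * PowerSeries.coeff (R := ℚ) m ((gS b) ^ k)) := rfl
  rw [hg, hE]
  apply PowerSeries.ext
  intro m
  cases m with
  | zero =>
    rw [mul_comm, PowerSeries.coeff_zero_mul_X, coeff_gS, if_pos rfl]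
  | succ n =>
    rw [PowerSeries.coeff_succ_X_mul, PowerSeries.coeff_mk]
    rcases Nat.eq_zero_or_pos n with h0 | h0
    · subst h0
      rw [Finset.sum_range_one, coeff_gS]
      norm_num
    · have hterm : ∀ k ∈ range (n+1),
          (b : ℚ) ^ k / (k ! : ℚ) * PowerSeries.coeff (R := ℚ) n ((gS b) ^ k)
          = (b:ℚ)^n / ((n ! : ℕ):ℚ) * (if k = 0 then 0 else (n.choose k : ℚ) * aQ (n-k) (k:ℚ)) := by
        intro k hk
        simp only [mem_range] at hk
        rcases Nat.eq_zero_or_pos k with hk0 | hk1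
        · subst hk0
          rw [pow_zero (gS b), PowerSeries.coeff_one, if_neg (by omega), if_pos rfl]
          simp
        · rw [GK b k hk1 n, if_neg (show ¬ n < k from by omega), if_neg (by omega)]
          rw [Nat.cast_choose ℚ (show k ≤ n from by omega)]
          have eb : (b:ℚ)^k * (b:ℚ)^(n-k) = (b:ℚ)^n := by rw [← pow_add]; congr 1; omega
          rw [← eb]
          have h1 : ((k ! : ℕ):ℚ) ≠ 0 := by positivity
          have h2 : (((n-k)! : ℕ):ℚ) ≠ 0 := by positivity
          have h3 : ((n ! : ℕ):ℚ) ≠ 0 := by positivity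
          field_simp
      rw [Finset.sum_congr rfl hterm, ← Finset.mul_sum, finalId n h0, coeff_gS,
        if_neg (Nat.succ_ne_zero n)]
      have e1 : ((b:ℚ) * ((n+1:ℕ):ℚ))^(n+1-1) = (b:ℚ)^n * ((n+1:ℕ):ℚ)^n := by
        rw [show n+1-1 = n from rfl, mul_pow]
      have e2 : ((n+1:ℕ):ℚ)^n = ((n+1:ℕ):ℚ)^(n-1) * ((n+1:ℕ):ℚ) := by
        rw [← pow_succ]; congr 1; omega
      have e3 : (((n+1)! : ℕ):ℚ) = ((n+1:ℕ):ℚ) * ((n ! : ℕ):ℚ) := by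
        rw [Nat.factorial_succ]; push_cast; ring
      rw [e1, e2, e3]
      have h1 : ((n ! : ℕ):ℚ) ≠ 0 := by positivity
      have h2 : ((n+1:ℕ):ℚ) ≠ 0 := by positivity
      field_simp


end PSPart
end

section
/- The linear map T(x_1,...,x_n) = (x_1 - 1, x_2 - x_1, ..., x_n - x_{n-1}) gives an integral equivalence between the weakly increasing x-parking function polytope X^w_n(a,b) and the Pitman-Stanley polytope PS_n(a-1, b, ..., b), with inverse S(y) = (1+y_1, 1+y_1+y_2, ..., 1+y_1+...+y_n). -/
open Finset

/-- The weakly increasing x-parking function polytope `X^w_n(a,b)`: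
convex hull of all weakly increasing positive-integer tuples with
`a_i ≤ a + (i-1)·b` (0-indexed: `f i ≤ a + i·b`). -/
def XwPFP (n a b : ℕ) : Set (Fin n → ℝ) :=
  convexHull ℝ {x : Fin n → ℝ | ∃ f : Fin n → ℕ,
    (∀ i, 1 ≤ f i) ∧ Monotone f ∧ (∀ i : Fin n, f i ≤ a + (i : ℕ) * b) ∧
    x = fun i => (f i : ℝ)}

/-- The Pitman-Stanley polytope `PS_n(x)`. -/
def PS (n : ℕ) (x : Fin n → ℝ) : Set (Fin n → ℝ) :=
  {y | ∀ i : Fin n, 0 ≤ y i ∧ ∑ j ∈ Finset.Iic i, y j ≤ ∑ j ∈ Finset.Iic i, x j}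

/-! ### Auxiliary definitions -/

/-- The generating set of `XwPFP`. -/
def PkGen (n a b : ℕ) : Set (Fin n → ℝ) :=
  {x : Fin n → ℝ | ∃ f : Fin n → ℕ,
    (∀ i, 1 ≤ f i) ∧ Monotone f ∧ (∀ i : Fin n, f i ≤ a + (i : ℕ) * b) ∧
    x = fun i => (f i : ℝ)}

lemma XwPFP_eq (n a b : ℕ) : XwPFP n a b = convexHull ℝ (PkGen n a b) := rfl

/-- The map `T`. -/
def Tmap (n : ℕ) : (Fin n → ℝ) → (Fin n → ℝ) := fun x i =>
  x i - (if _ : (i : ℕ) = 0 then 1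
         else x ⟨(i : ℕ) - 1, Nat.lt_of_le_of_lt (Nat.sub_le _ _) i.isLt⟩)

/-- Extension of a function on `Fin n` to `ℕ` by zero. -/
def Ee {n : ℕ} (x : Fin n → ℝ) : ℕ → ℝ := fun k => if h : k < n then x ⟨k, h⟩ else 0

lemma Ee_val {n : ℕ} (x : Fin n → ℝ) (i : Fin n) : Ee x (i : ℕ) = x i := by
  simp [Ee, i.isLt]

/-- Shift of `Ee` with initial value 1. -/
def Gg {n : ℕ} (x : Fin n → ℝ) : ℕ → ℝ := fun k => if k = 0 then 1 else Ee x (k - 1)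

lemma Tmap_eq {n : ℕ} (x : Fin n → ℝ) (j : Fin n) :
    Tmap n x j = Gg x ((j : ℕ) + 1) - Gg x (j : ℕ) := by
  rcases j with ⟨jv, hj⟩
  by_cases h : jv = 0
  · subst h
    simp [Tmap, Gg, Ee, hj]
  · have h1 : jv - 1 < n := Nat.lt_of_le_of_lt (Nat.sub_le _ _) hj
    simp [Tmap, Gg, Ee, hj, h, h1]

lemma sum_Iic_eq {n : ℕ} (x : Fin n → ℝ) (i : Fin n) :
    ∑ j ∈ Finset.Iic i, x j = ∑ k ∈ Finset.range ((i : ℕ) + 1), Ee x k := by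
  refine Finset.sum_bij' (fun j _ => (j : ℕ))
    (fun k hk => (⟨k, lt_of_lt_of_le (Finset.mem_range.mp hk) i.isLt⟩ : Fin n))
    ?_ ?_ ?_ ?_ ?_
  · intro j hj
    simp only [Finset.mem_Iic] at hj
    simp [Finset.mem_range, Nat.lt_succ_iff, Fin.le_def.mp hj]
  · intro k hk
    simp only [Finset.mem_range, Nat.lt_succ_iff] at hk
    simp [Finset.mem_Iic, Fin.le_def, hk]
  · intro j hj; simp
  · intro k hk; simp
  · intro j hj
    simp [Ee, j.isLt]

lemma sum_Iic_Tmap {n : ℕ} (x : Fin n → ℝ) (i : Fin n) :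
    ∑ j ∈ Finset.Iic i, Tmap n x j = x i - 1 := by
  rw [sum_Iic_eq (Tmap n x) i]
  have h : ∀ k ∈ Finset.range ((i : ℕ) + 1), Ee (Tmap n x) k = Gg x (k + 1) - Gg x k := by
    intro k hk
    have hkn : k < n := by
      have h1 := Finset.mem_range.mp hk
      have h2 := i.isLt
      omega
    rw [show Ee (Tmap n x) k = Tmap n x ⟨k, hkn⟩ from by simp [Ee, hkn]]
    exact Tmap_eq x ⟨k, hkn⟩
  rw [Finset.sum_congr rfl h, Finset.sum_range_sub (Gg x)]
  simp [Gg, Ee, i.isLt]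

/-- Linear part of `T`. -/
noncomputable def TmapL (n : ℕ) : (Fin n → ℝ) →ₗ[ℝ] (Fin n → ℝ) where
  toFun x := fun i =>
    x i - (if _ : (i : ℕ) = 0 then 0
           else x ⟨(i : ℕ) - 1, Nat.lt_of_le_of_lt (Nat.sub_le _ _) i.isLt⟩)
  map_add' x y := by
    funext i
    by_cases h : (i : ℕ) = 0 <;> simp [h] <;> ring
  map_smul' c x := by
    funext i
    by_cases h : (i : ℕ) = 0 <;> simp [h] <;> ring

/-- `T` as an affine map. -/
noncomputable def TmapA (n : ℕ) : (Fin n → ℝ) →ᵃ[ℝ] (Fin n → ℝ) where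
  toFun := Tmap n
  linear := TmapL n
  map_vadd' p v := by
    funext i
    show Tmap n (v + p) i = TmapL n v i + Tmap n p i
    by_cases h : (i : ℕ) = 0 <;> simp [Tmap, TmapL, h] <;> ring

lemma PkGen_finite (n a b : ℕ) : (PkGen n a b).Finite := by
  have h : PkGen n a b ⊆
      (fun f : Fin n → ℕ => fun i => (f i : ℝ)) ''
        (Set.univ.pi fun _ : Fin n => Set.Iic (a + n * b)) := by
    rintro x ⟨f, hf1, hfm, hfb, rfl⟩
    refine ⟨f, ?_, rfl⟩
    intro i _
    exact le_trans (hfb i) (Nat.add_le_add_left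
      (Nat.mul_le_mul_right b i.isLt.le) a)
  exact Set.Finite.subset (Set.Finite.image _ (Set.Finite.pi fun _ => Set.finite_Iic _)) h

lemma PS_convex (n : ℕ) (xv : Fin n → ℝ) : Convex ℝ (PS n xv) := by
  intro y hy z hz p q hp hq hpq
  intro i
  constructor
  · have h1 := (hy i).1
    have h2 := (hz i).1
    have : (p • y + q • z) i = p * y i + q * z i := rfl
    rw [this]
    nlinarith
  · have h1 := (hy i).2
    have h2 := (hz i).2
    have hsum : ∑ j ∈ Finset.Iic i, (p • y + q • z) j =
        p * ∑ j ∈ Finset.Iic i, y j + q * ∑ j ∈ Finset.Iic i, z j := by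
      rw [Finset.mul_sum, Finset.mul_sum, ← Finset.sum_add_distrib]
      exact Finset.sum_congr rfl fun j _ => rfl
    rw [hsum]
    have hy' := mul_le_mul_of_nonneg_left h1 hp
    have hz' := mul_le_mul_of_nonneg_left h2 hq
    have h3 : p * ∑ j ∈ Finset.Iic i, xv j + q * ∑ j ∈ Finset.Iic i, xv j
        = ∑ j ∈ Finset.Iic i, xv j := by
      rw [← add_mul, hpq, one_mul]
    linarith

/-- Sum of the `PS` parameter vector. -/
lemma sum_xv {n : ℕ} (a b : ℕ) (i : Fin n) :
    ∑ j ∈ Finset.Iic i, (if (j : ℕ) = 0 then (a : ℝ) - 1 else (b : ℝ)) =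
      (a : ℝ) - 1 + (i : ℕ) * b := by
  rw [sum_Iic_eq (fun j => if (j : ℕ) = 0 then (a : ℝ) - 1 else (b : ℝ)) i]
  have h : ∀ k ∈ Finset.range ((i : ℕ) + 1),
      Ee (fun j : Fin n => if (j : ℕ) = 0 then (a : ℝ) - 1 else (b : ℝ)) k =
        (if k = 0 then (a : ℝ) - 1 else (b : ℝ)) := by
    intro k hk
    have hkn : k < n := by
      have h1 := Finset.mem_range.mp hk
      have h2 := i.isLt
      omega
    simp [Ee, hkn]
  rw [Finset.sum_congr rfl h, Finset.sum_range_succ']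
  simp [Finset.sum_const, nsmul_eq_mul]
  ring

/-- The rounding lemma: the key integral computation. -/
lemma floor_integral (c : ℝ) :
    ∫ t in Set.Ioo (0 : ℝ) 1, ((⌊c + t⌋ : ℤ) : ℝ) = c := by
  have hfr0 : 0 ≤ Int.fract c := Int.fract_nonneg c
  have hfr1 : Int.fract c < 1 := Int.fract_lt_one c
  set θ : ℝ := 1 - Int.fract c with hθ
  have hθ0 : 0 < θ := by rw [hθ]; linarith
  have hθ1 : θ ≤ 1 := by rw [hθ]; linarith
  have key : Set.EqOn (fun t => ((⌊c + t⌋ : ℤ) : ℝ))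
      (fun t => ((⌊c⌋ : ℤ) : ℝ) + (Set.Ici θ).indicator (fun _ => (1 : ℝ)) t)
      (Set.Ioo (0 : ℝ) 1) := by
    intro t ht
    obtain ⟨ht0, ht1⟩ := ht
    have hc : c + t = ((⌊c⌋ : ℤ) : ℝ) + (Int.fract c + t) := by
      rw [← add_assoc, Int.floor_add_fract]
    rw [show (fun t => ((⌊c + t⌋ : ℤ) : ℝ)) t = ((⌊c + t⌋ : ℤ) : ℝ) from rfl, hc,
      Int.floor_intCast_add]
    by_cases h : θ ≤ t
    · have hth : 1 - Int.fract c ≤ t := by rw [← hθ]; exact h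
      have h1 : ⌊Int.fract c + t⌋ = 1 := by
        rw [Int.floor_eq_iff]
        constructor
        · push_cast; linarith
        · push_cast; linarith
      simp only [h1, Set.indicator_of_mem (Set.mem_Ici.mpr h)]
      push_cast; ring
    · have hth : t < 1 - Int.fract c := by rw [← hθ]; exact not_le.mp h
      have h1 : ⌊Int.fract c + t⌋ = 0 := by
        rw [Int.floor_eq_iff]
        constructor
        · push_cast; linarith
        · push_cast; linarith
      simp only [h1, Set.indicator_of_notMem (Set.notMem_Ici.mpr (not_le.mp h))]
      push_cast; ring
  rw [MeasureTheory.setIntegral_congr_fun measurableSet_Ioo key]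
  have hind : MeasureTheory.Integrable ((Set.Ici θ).indicator (fun _ => (1 : ℝ)))
      (MeasureTheory.volume.restrict (Set.Ioo (0 : ℝ) 1)) := by
    exact (MeasureTheory.integrable_const (1 : ℝ)).indicator measurableSet_Ici
  rw [MeasureTheory.integral_add (MeasureTheory.integrable_const _) hind,
    MeasureTheory.integral_const, MeasureTheory.integral_indicator measurableSet_Ici,
    MeasureTheory.Measure.restrict_restrict measurableSet_Ici,
    MeasureTheory.setIntegral_const]
  have hset : Set.Ici θ ∩ Set.Ioo (0 : ℝ) 1 = Set.Ico θ 1 := by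
    ext t
    simp only [Set.mem_inter_iff, Set.mem_Ici, Set.mem_Ioo, Set.mem_Ico]
    constructor
    · rintro ⟨h1, _, h3⟩; exact ⟨h1, h3⟩
    · rintro ⟨h1, h2⟩; exact ⟨h1, lt_of_lt_of_le hθ0 h1, h2⟩
  rw [MeasureTheory.measureReal_def, MeasureTheory.measureReal_def,
    MeasureTheory.Measure.restrict_apply_univ, hset, Real.volume_Ico, Real.volume_Ioo]
  rw [ENNReal.toReal_ofReal (sub_nonneg.mpr hθ1), ENNReal.toReal_ofReal (by norm_num : (0:ℝ) ≤ 1 - 0)]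
  simp only [smul_eq_mul, mul_one, one_mul, hθ]
  have := Int.floor_add_fract c
  linarith

/-- The key geometric lemma: a real point satisfying the defining inequalities
lies in the convex hull of the integer points. -/
lemma mem_hull_of_ineqs {n a b : ℕ} (x : Fin n → ℝ) (h1 : ∀ i, 1 ≤ x i)
    (hm : Monotone x) (hub : ∀ i : Fin n, x i ≤ (a : ℝ) + (i : ℕ) * b) :
    x ∈ convexHull ℝ (PkGen n a b) := by
  set μ := MeasureTheory.volume.restrict (Set.Ioo (0 : ℝ) 1) with hμ
  haveI : MeasureTheory.IsProbabilityMeasure μ := by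
    constructor
    rw [hμ, MeasureTheory.Measure.restrict_apply_univ, Real.volume_Ioo]
    norm_num
  set v : ℝ → (Fin n → ℝ) := fun t i => ((⌊x i + t⌋ : ℤ) : ℝ) with hv
  -- membership of values
  have hmem : ∀ t ∈ Set.Ioo (0 : ℝ) 1, v t ∈ PkGen n a b := by
    intro t ht
    obtain ⟨ht0, ht1⟩ := ht
    have hfl1 : ∀ i : Fin n, 1 ≤ ⌊x i + t⌋ := by
      intro i
      rw [Int.le_floor]
      push_cast
      linarith [h1 i]
    have hflb : ∀ i : Fin n, ⌊x i + t⌋ ≤ ((a + (i : ℕ) * b : ℕ) : ℤ) := by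
      intro i
      have hlt : ((⌊x i + t⌋ : ℤ) : ℝ) < ((a + (i : ℕ) * b : ℕ) : ℤ) + 1 := by
        push_cast
        have := Int.floor_le (x i + t)
        have := hub i
        linarith
      have h2 : ⌊x i + t⌋ < ((a + (i : ℕ) * b : ℕ) : ℤ) + 1 := by exact_mod_cast hlt
      omega
    refine ⟨fun i => (⌊x i + t⌋).toNat, ?_, ?_, ?_, ?_⟩
    · intro i
      show 1 ≤ (⌊x i + t⌋).toNat
      have := hfl1 i
      omega
    · intro i j hij
      show (⌊x i + t⌋).toNat ≤ (⌊x j + t⌋).toNat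
      have := Int.floor_le_floor (show x i + t ≤ x j + t by linarith [hm hij])
      omega
    · intro i
      show (⌊x i + t⌋).toNat ≤ a + (i : ℕ) * b
      have h1 := hflb i
      have h2 := hfl1 i
      omega
    · funext i
      simp only [hv]
      have hz : ((⌊x i + t⌋).toNat : ℤ) = ⌊x i + t⌋ :=
        Int.toNat_of_nonneg (le_trans (by norm_num) (hfl1 i))
      exact_mod_cast hz.symm
  have hmem_ae : ∀ᵐ t ∂μ, v t ∈ PkGen n a b :=
    (MeasureTheory.ae_restrict_mem measurableSet_Ioo).mono hmem
  -- integrability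
  have hvmeas : Measurable v := by
    apply measurable_pi_lambda
    intro i
    exact measurable_from_top.comp (Int.measurable_floor.comp (measurable_id.const_add (x i)))
  have hbnd : ∀ᵐ t ∂μ, ‖v t‖ ≤ ‖x‖ + 2 := by
    refine (MeasureTheory.ae_restrict_mem measurableSet_Ioo).mono ?_
    intro t ht
    obtain ⟨ht0, ht1⟩ := ht
    rw [pi_norm_le_iff_of_nonneg (by positivity)]
    intro i
    have hxi : |x i| ≤ ‖x‖ := by
      rw [← Real.norm_eq_abs]; exact norm_le_pi_norm x i
    have h1 := Int.floor_le (x i + t)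
    have h2 := Int.sub_one_lt_floor (x i + t)
    rw [Real.norm_eq_abs, abs_le]
    constructor
    · have := neg_abs_le (x i)
      linarith [abs_le.mp hxi]
    · have := le_abs_self (x i)
      linarith [abs_le.mp hxi]
  have hint : MeasureTheory.Integrable v μ :=
    MeasureTheory.Integrable.mono' (MeasureTheory.integrable_const _)
      hvmeas.aestronglyMeasurable hbnd
  -- the integral is in the hull
  have hhull : ∫ t, v t ∂μ ∈ convexHull ℝ (PkGen n a b) := by
    refine Convex.integral_mem (convex_convexHull ℝ _)
      (Set.Finite.isClosed_convexHull ℝ (PkGen_finite n a b)) ?_ hint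
    exact hmem_ae.mono fun t ht => subset_convexHull ℝ _ ht
  -- the integral is x
  have hInt_eq : ∫ t, v t ∂μ = x := by
    funext i
    have hcomp : (∫ t, v t ∂μ) i = ∫ t, v t i ∂μ := by
      have := ContinuousLinearMap.integral_comp_comm
        (ContinuousLinearMap.proj (R := ℝ) (φ := fun _ : Fin n => ℝ) i) hint
      simpa using this.symm
    rw [hcomp]
    exact floor_integral (x i)
  rwa [hInt_eq] at hhull

/-- The map `T(x) = (x_1-1, x_2-x_1, ..., x_n-x_{n-1})` gives an integral
equivalence between `X^w_n(a,b)` and the Pitman-Stanley polytope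
`PS_n(a-1,b,...,b)`, with inverse `S(y) = (1+y_1, 1+y_1+y_2, ..., 1+y_1+⋯+y_n)`. -/
theorem stmt_18 (n a b : ℕ) (hn : 0 < n) (ha : 0 < a) (hb : 0 < b) :
    let T : (Fin n → ℝ) → (Fin n → ℝ) := fun x i =>
      x i - (if _ : (i : ℕ) = 0 then 1
             else x ⟨(i : ℕ) - 1, Nat.lt_of_le_of_lt (Nat.sub_le _ _) i.isLt⟩)
    let S : (Fin n → ℝ) → (Fin n → ℝ) := fun y i => 1 + ∑ j ∈ Finset.Iic i, y j
    T '' XwPFP n a b = PS n (fun i => if (i : ℕ) = 0 then (a : ℝ) - 1 else (b : ℝ)) ∧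
    (∀ x, S (T x) = x) ∧ (∀ y, T (S y) = y) ∧
    (∀ x : Fin n → ℝ, (∀ i, ∃ z : ℤ, x i = (z : ℝ)) ↔ (∀ i, ∃ z : ℤ, T x i = (z : ℝ))) := by
  intro T S
  have hT : T = Tmap n := rfl
  -- S ∘ T = id
  have hST : ∀ x, S (T x) = x := by
    intro x
    funext i
    show 1 + ∑ j ∈ Finset.Iic i, T x j = x i
    rw [hT, sum_Iic_Tmap]
    ring
  -- T ∘ S = id
  have hTS : ∀ y, T (S y) = y := by
    intro y
    funext i
    show S y i - (if _ : (i : ℕ) = 0 then 1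
        else S y ⟨(i : ℕ) - 1, Nat.lt_of_le_of_lt (Nat.sub_le _ _) i.isLt⟩) = y i
    by_cases h : (i : ℕ) = 0
    · rw [dif_pos h]
      show 1 + ∑ j ∈ Finset.Iic i, y j - 1 = y i
      rw [sum_Iic_eq, h]
      simp only [zero_add, Finset.sum_range_one]
      have h0 : (⟨0, hn⟩ : Fin n) = i := Fin.ext h.symm
      rw [show Ee y 0 = y ⟨0, hn⟩ from by simp [Ee, hn], h0]
      ring
    · rw [dif_neg h]
      obtain ⟨m, hm⟩ : ∃ m, (i : ℕ) = m + 1 := ⟨(i : ℕ) - 1, by omega⟩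
      have hprev : (⟨(i : ℕ) - 1, Nat.lt_of_le_of_lt (Nat.sub_le _ _) i.isLt⟩ : Fin n)
          = ⟨m, by omega⟩ := by
        apply Fin.ext; simp [hm]
      show (1 + ∑ j ∈ Finset.Iic i, y j) -
          (1 + ∑ j ∈ Finset.Iic (⟨(i : ℕ) - 1,
            Nat.lt_of_le_of_lt (Nat.sub_le _ _) i.isLt⟩ : Fin n), y j) = y i
      rw [hprev, sum_Iic_eq y i, sum_Iic_eq y ⟨m, by omega⟩]
      simp only [hm]
      rw [Finset.sum_range_succ]
      have : Ee y (m + 1) = y i := by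
        rw [← hm]
        exact Ee_val y i
      rw [this]
      ring
  refine ⟨?_, hST, hTS, ?_⟩
  · -- main polytope equality
    have himg : T '' XwPFP n a b = convexHull ℝ (Tmap n '' PkGen n a b) := by
      rw [hT, XwPFP_eq]
      rw [show Tmap n = ⇑(TmapA n) from rfl]
      exact AffineMap.image_convexHull (TmapA n) (PkGen n a b)
    rw [himg]
    apply le_antisymm
    · -- hull of image ⊆ PS
      apply convexHull_min ?_ (PS_convex n _)
      rintro y ⟨x, ⟨f, hf1, hfm, hfb, rfl⟩, rfl⟩
      intro i
      constructor
      · show (0 : ℝ) ≤ Tmap n _ i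
        unfold Tmap
        by_cases h : (i : ℕ) = 0
        · rw [dif_pos h]
          have := hf1 i
          simp only
          have : (1 : ℝ) ≤ (f i : ℝ) := by exact_mod_cast hf1 i
          linarith
        · rw [dif_neg h]
          have hle : (⟨(i : ℕ) - 1, Nat.lt_of_le_of_lt (Nat.sub_le _ _) i.isLt⟩ : Fin n) ≤ i := by
            simp [Fin.le_def]
          have := hfm hle
          simp only
          exact sub_nonneg.mpr (by exact_mod_cast this)
      · rw [sum_Iic_Tmap, sum_xv a b i]
        have := hfb i
        have hcast : ((f i : ℕ) : ℝ) ≤ (a : ℝ) + (i : ℕ) * b := by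
          exact_mod_cast this
        linarith
    · -- PS ⊆ hull of image
      intro y hy
      set x : Fin n → ℝ := S y with hx
      have hynn : ∀ j : Fin n, 0 ≤ y j := fun j => (hy j).1
      have hxm : Monotone x := by
        intro i j hij
        show 1 + ∑ k ∈ Finset.Iic i, y k ≤ 1 + ∑ k ∈ Finset.Iic j, y k
        have := Finset.sum_le_sum_of_subset_of_nonneg
          (Finset.Iic_subset_Iic.mpr hij) (fun k _ _ => hynn k)
        linarith
      have hx1 : ∀ i, 1 ≤ x i := by
        intro i
        show 1 ≤ 1 + ∑ k ∈ Finset.Iic i, y k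
        have : 0 ≤ ∑ k ∈ Finset.Iic i, y k :=
          Finset.sum_nonneg fun k _ => hynn k
        linarith
      have hxub : ∀ i : Fin n, x i ≤ (a : ℝ) + (i : ℕ) * b := by
        intro i
        have h2 := (hy i).2
        rw [sum_xv a b i] at h2
        show 1 + ∑ k ∈ Finset.Iic i, y k ≤ (a : ℝ) + (i : ℕ) * b
        linarith
      have hxh : x ∈ convexHull ℝ (PkGen n a b) := mem_hull_of_ineqs x hx1 hxm hxub
      have hyx : y = Tmap n x := by rw [← hT]; exact (hTS y).symm
      have himg2 : convexHull ℝ (Tmap n '' PkGen n a b)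
          = Tmap n '' convexHull ℝ (PkGen n a b) := by
        rw [show Tmap n = ⇑(TmapA n) from rfl]
        exact (AffineMap.image_convexHull (TmapA n) (PkGen n a b)).symm
      rw [hyx, himg2]
      exact Set.mem_image_of_mem _ hxh
  · -- lattice preservation
    intro x
    constructor
    · intro hx i
      obtain ⟨z, hz⟩ := hx i
      by_cases h : (i : ℕ) = 0
      · refine ⟨z - 1, ?_⟩
        show x i - (if _ : (i : ℕ) = 0 then (1:ℝ) else _) = _
        rw [dif_pos h, hz]; push_cast; ring
      · obtain ⟨w, hw⟩ := hx ⟨(i : ℕ) - 1, Nat.lt_of_le_of_lt (Nat.sub_le _ _) i.isLt⟩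
        refine ⟨z - w, ?_⟩
        show x i - (if _ : (i : ℕ) = 0 then (1:ℝ) else _) = _
        rw [dif_neg h, hz, hw]; push_cast; ring
    · intro hTx i
      choose g hg using hTx
      refine ⟨1 + ∑ j ∈ Finset.Iic i, g j, ?_⟩
      have : x i = 1 + ∑ j ∈ Finset.Iic i, T x j := by
        conv_lhs => rw [← hST x]
      rw [this]
      rw [Finset.sum_congr rfl fun j _ => hg j]
      push_cast
      ring
end

section
/- For every nonnegative integer t, the number of lattice points in the t-th dilate of X^w_n(a,b) is (1/n!)·(t(a-1)+1)·(t(a-1+nb)+2)·(t(a-1+nb)+3)···(t(a-1+nb)+n). -/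
open Finset Nat Pointwise

open Classical in
noncomputable def par (n A B : ℕ) : Finset (Fin n → ℕ) :=
  (Fintype.piFinset fun i : Fin n => Finset.Icc 1 (A + (i : ℕ) * B)).filter Monotone

lemma mem_par {n A B : ℕ} {f : Fin n → ℕ} :
    f ∈ par n A B ↔ (∀ i : Fin n, 1 ≤ f i ∧ f i ≤ A + (i : ℕ) * B) ∧ Monotone f := by
  simp [par, Fintype.mem_piFinset, forall_and]

lemma par_one (A B : ℕ) : (par 1 A B).card = A := by
  have : par 1 A B = Fintype.piFinset fun i : Fin 1 => Finset.Icc 1 (A + (i : ℕ) * B) := by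
    apply Finset.filter_true_of_mem
    intro f _ i j hij
    exact le_of_eq (congrArg f (Subsingleton.elim i j))
  rw [this, Fintype.card_piFinset]
  simp

open Classical in
lemma par_rec (n A B : ℕ) :
    (par (n+1) A B).card = ∑ m ∈ Finset.Icc 1 A, (par n (m + B) B).card := by
  have hmaps : ∀ f ∈ par (n+1) A B, f 0 ∈ Finset.Icc 1 A := by
    intro f hf
    obtain ⟨hb, -⟩ := mem_par.1 hf
    have := hb 0
    simpa using this
  rw [Finset.card_eq_sum_card_fiberwise hmaps]
  have hfib : ∀ k ∈ Finset.Icc 1 A,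
      ((par (n+1) A B).filter fun f => f 0 = k).card = (par n (A + B + 1 - k) B).card := by
    intro k hk
    simp only [Finset.mem_Icc] at hk
    apply Finset.card_bij (fun f _ => fun i : Fin n => f i.succ + 1 - k)
    · -- maps into par n (A+B+1-k) B
      intro f hf
      simp only [Finset.mem_filter] at hf
      obtain ⟨hfp, hf0⟩ := hf
      obtain ⟨hb, hmono⟩ := mem_par.1 hfp
      refine mem_par.2 ⟨fun i => ?_, fun i j hij => ?_⟩
      · have h1 := (hb i.succ).1
        have h2 := (hb i.succ).2
        have hk' : k ≤ f i.succ := hf0 ▸ hmono (Fin.zero_le _)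
        have hsv : ((i.succ : Fin (n+1)) : ℕ) = (i : ℕ) + 1 := by simp
        rw [hsv] at h2
        have : ((i : ℕ) + 1) * B = B + (i : ℕ) * B := by ring
        rw [this] at h2
        omega
      · have : f i.succ ≤ f j.succ := hmono (by simpa using hij)
        show f i.succ + 1 - k ≤ f j.succ + 1 - k
        omega
    · -- injective
      intro f hf f' hf' heq
      simp only [Finset.mem_filter] at hf hf'
      obtain ⟨hfp, hf0⟩ := hf
      obtain ⟨hfp', hf0'⟩ := hf'
      obtain ⟨hb, hmono⟩ := mem_par.1 hfp
      obtain ⟨hb', hmono'⟩ := mem_par.1 hfp'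
      funext i
      rcases Fin.eq_zero_or_eq_succ i with rfl | ⟨j, rfl⟩
      · rw [hf0, hf0']
      · have h1 : f j.succ + 1 - k = f' j.succ + 1 - k := congrFun heq j
        have hk1 : k ≤ f j.succ := hf0 ▸ hmono (Fin.zero_le _)
        have hk2 : k ≤ f' j.succ := hf0' ▸ hmono' (Fin.zero_le _)
        omega
    · -- surjective
      intro w hw
      obtain ⟨hb, hmono⟩ := mem_par.1 hw
      refine ⟨fun i => if h : i = 0 then k else w (i.pred h) + k - 1, ?_, ?_⟩
      · simp only [Finset.mem_filter]
        constructor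
        · refine mem_par.2 ⟨fun i => ?_, fun i j hij => ?_⟩
          · by_cases h : i = 0
            · subst h; simp; omega
            · have h1 := (hb (i.pred h)).1
              have h2 := (hb (i.pred h)).2
              have hv : ((i.pred h : Fin n) : ℕ) = (i : ℕ) - 1 := by simp
              have hne : (i : ℕ) ≠ 0 := fun hc => h (Fin.ext hc)
              have hIB : (i : ℕ) * B = ((i : ℕ) - 1) * B + B := by
                cases' Nat.exists_eq_succ_of_ne_zero hne with m hm
                rw [hm, Nat.succ_sub_one, Nat.succ_mul]
              rw [dif_neg h]
              rw [hv] at h2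
              omega
          · by_cases hi : i = 0
            · subst hi
              by_cases hj : j = 0
              · subst hj; simp
              · simp only [dif_pos, dif_neg hj]
                have := (hb (j.pred hj)).1
                omega
            · have hj : j ≠ 0 := by
                intro hc; subst hc
                exact hi (Fin.le_zero_iff.1 hij)
              simp only [dif_neg hi, dif_neg hj]
              have hple : i.pred hi ≤ j.pred hj := by
                rw [Fin.le_def] at hij ⊢
                simp only [Fin.coe_pred]
                omega
              have := hmono hple
              omega
        · simp
      · funext i
        have hs : (i.succ : Fin (n+1)) ≠ 0 := Fin.succ_ne_zero i
        simp only [dif_neg hs]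
        have : (i.succ.pred hs) = i := by simp
        rw [this]
        have := (hb i).1
        omega
  rw [Finset.sum_congr rfl hfib]
  refine Finset.sum_nbij' (fun k => A + 1 - k) (fun m => A + 1 - m) ?_ ?_ ?_ ?_ ?_
  · intro k hk; simp only [Finset.mem_Icc] at *; omega
  · intro m hm; simp only [Finset.mem_Icc] at *; omega
  · intro k hk; simp only [Finset.mem_Icc] at hk; show A + 1 - (A + 1 - k) = k; omega
  · intro m hm; simp only [Finset.mem_Icc] at hm; show A + 1 - (A + 1 - m) = m; omega
  · intro k hk
    simp only [Finset.mem_Icc] at hk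
    show (par n (A + B + 1 - k) B).card = (par n (A + 1 - k + B) B).card
    have : A + B + 1 - k = A + 1 - k + B := by omega
    rw [this]

lemma telesc (n B m : ℕ) :
    (m+1) * ∏ j ∈ Finset.range (n+1), (m+1 + (n+2)*B + j + 1) =
    m * ∏ j ∈ Finset.range (n+1), (m + (n+2)*B + j + 1)
      + (n+2) * ((m+1+B) * ∏ j ∈ Finset.range n, (m+1+B + (n+1)*B + j + 1)) := by
  have h1 : ∏ j ∈ Finset.range (n+1), (m+1 + (n+2)*B + j + 1)
      = (∏ j ∈ Finset.range n, (m + (n+2)*B + j + 2)) * (m + (n+2)*B + n + 2) := by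
    rw [Finset.prod_range_succ]
    congr 1
    · exact Finset.prod_congr rfl fun j _ => by ring
    · ring
  have h2 : ∏ j ∈ Finset.range (n+1), (m + (n+2)*B + j + 1)
      = (∏ j ∈ Finset.range n, (m + (n+2)*B + j + 2)) * (m + (n+2)*B + 0 + 1) := by
    rw [Finset.prod_range_succ']
    exact congrArg₂ (· * ·) (Finset.prod_congr rfl fun j _ => by ring) rfl
  have h3 : ∏ j ∈ Finset.range n, (m+1+B + (n+1)*B + j + 1)
      = ∏ j ∈ Finset.range n, (m + (n+2)*B + j + 2) :=
    Finset.prod_congr rfl fun j _ => by ring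
  rw [h1, h2, h3]
  ring

lemma sum_G (n B : ℕ) : ∀ A : ℕ,
    ∑ m ∈ Finset.Icc 1 A, (n+2) * ((m+B) * ∏ j ∈ Finset.range n, (m+B+(n+1)*B+j+1))
      = A * ∏ j ∈ Finset.range (n+1), (A + (n+2)*B + j + 1)
  | 0 => by simp
  | (A+1) => by
      rw [Finset.sum_Icc_succ_top (by omega : 1 ≤ A + 1), sum_G n B A]
      exact (telesc n B A).symm

lemma key (B : ℕ) : ∀ n A : ℕ, (n+1)! * (par (n+1) A B).card
    = A * ∏ j ∈ Finset.range n, (A + (n+1)*B + j + 1)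
  | 0, A => by simp [par_one]
  | (n+1), A => by
    show (n+2)! * (par (n+2) A B).card
        = A * ∏ j ∈ Finset.range (n+1), (A + (n+2)*B + j + 1)
    rw [par_rec, Finset.mul_sum]
    have hcongr : ∀ m ∈ Finset.Icc 1 A, (n+2)! * (par (n+1) (m+B) B).card
        = (n+2) * ((m+B) * ∏ j ∈ Finset.range n, (m+B+(n+1)*B+j+1)) := by
      intro m _
      have : (n+2)! = (n+2) * (n+1)! := rfl
      rw [this, mul_assoc, key B n (m+B)]
    rw [Finset.sum_congr rfl hcongr, sum_G]

lemma sumdiv (t : ℕ) (ht : 0 < t) : ∀ m : ℕ, (∑ k ∈ Finset.range t, (m + k) / t) = m := by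
  intro m
  induction m with
  | zero =>
      refine Finset.sum_eq_zero fun k hk => ?_
      simp only [Nat.zero_add]
      exact Nat.div_eq_of_lt (Finset.mem_range.1 hk)
  | succ m ih =>
      have h1 : ∑ k ∈ Finset.range (t+1), (m + k) / t
          = (∑ k ∈ Finset.range t, (m + 1 + k) / t) + (m + 0) / t := by
        rw [Finset.sum_range_succ']
        congr 1
        exact Finset.sum_congr rfl fun k _ => by congr 1; omega
      have h2 : ∑ k ∈ Finset.range (t+1), (m + k) / t
          = (∑ k ∈ Finset.range t, (m + k) / t) + (m + t) / t := Finset.sum_range_succ _ _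
      have h3 : (m + t) / t = m / t + 1 := Nat.add_div_right m ht
      simp only [Nat.add_zero] at h1
      omega

lemma xw_subset (n a b : ℕ) : XwPFP n a b ⊆
    {x : Fin n → ℝ | (∀ i, 1 ≤ x i) ∧ Monotone x ∧
      ∀ i : Fin n, x i ≤ (a : ℝ) + (i : ℕ) * (b : ℝ)} := by
  apply convexHull_min
  · rintro x ⟨f, h1, h2, h3, rfl⟩
    refine ⟨fun i => ?_, fun i j hij => ?_, fun i => ?_⟩
    · show (1 : ℝ) ≤ (f i : ℝ); exact_mod_cast h1 i
    · show (f i : ℝ) ≤ (f j : ℝ); exact_mod_cast h2 hij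
    · show (f i : ℝ) ≤ (a : ℝ) + (i : ℕ) * (b : ℝ)
      exact_mod_cast h3 i
  · rintro x ⟨hx1, hx2, hx3⟩ y ⟨hy1, hy2, hy3⟩ p q hp hq hpq
    refine ⟨fun i => ?_, fun i j hij => ?_, fun i => ?_⟩
    · have : p * 1 + q * 1 ≤ p * x i + q * y i := by
        have := hx1 i; have := hy1 i
        have h1 : p * 1 ≤ p * x i := by nlinarith
        have h2 : q * 1 ≤ q * y i := by nlinarith
        linarith
      simpa [hpq] using this.trans_eq rfl
    · have h1 : p * x i ≤ p * x j := by nlinarith [hx2 hij]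
      have h2 : q * y i ≤ q * y j := by nlinarith [hy2 hij]
      have : (p • x + q • y) i = p * x i + q * y i := rfl
      have : (p • x + q • y) j = p * x j + q * y j := rfl
      show p * x i + q * y i ≤ p * x j + q * y j
      linarith
    · have hxc := hx3 i; have hyc := hy3 i
      have h1 : p * x i ≤ p * ((a : ℝ) + (i : ℕ) * b) := by nlinarith
      have h2 : q * y i ≤ q * ((a : ℝ) + (i : ℕ) * b) := by nlinarith
      show p * x i + q * y i ≤ (a : ℝ) + (i : ℕ) * b
      have h3 : p * ((a : ℝ) + (i : ℕ) * b) + q * ((a : ℝ) + (i : ℕ) * b)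
          = (a : ℝ) + (i : ℕ) * b := by rw [← add_mul, hpq, one_mul]
      linarith

lemma mem_dilate (n a b t : ℕ) (ha : 0 < a) (g : Fin n → ℕ) (hg1 : ∀ i, t ≤ g i)
    (hg2 : Monotone g) (hg3 : ∀ i : Fin n, g i ≤ t * (a + (i : ℕ) * b)) :
    (fun i => (g i : ℝ)) ∈ (t : ℝ) • XwPFP n a b := by
  have hne : (XwPFP n a b).Nonempty := by
    refine ⟨fun _ => 1, subset_convexHull ℝ _ ⟨fun _ => 1, fun _ => le_refl 1,
      monotone_const, fun i => le_trans ha (Nat.le_add_right _ _), ?_⟩⟩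
    funext i; simp
  rcases Nat.eq_zero_or_pos t with rfl | ht
  · have hg : ∀ i, g i = 0 := fun i => le_antisymm (by simpa using hg3 i) (Nat.zero_le _)
    have hy : (fun i => ((g i : ℕ) : ℝ)) = (0 : Fin n → ℝ) := funext fun i => by simp [hg i]
    rw [hy, Nat.cast_zero, Set.zero_smul_set hne]
    exact Set.mem_zero.2 rfl
  · set S := {x : Fin n → ℝ | ∃ f : Fin n → ℕ,
      (∀ i, 1 ≤ f i) ∧ Monotone f ∧ (∀ i : Fin n, f i ≤ a + (i : ℕ) * b) ∧
      x = fun i => (f i : ℝ)} with hS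
    have htR : (t : ℝ) ≠ 0 := Nat.cast_ne_zero.2 ht.ne'
    have hz : ∀ k ∈ Finset.range t,
        (fun i : Fin n => (((g i + k) / t : ℕ) : ℝ)) ∈ S := by
      intro k hk
      have hkt : k < t := Finset.mem_range.1 hk
      refine ⟨fun i => (g i + k) / t, fun i => ?_, fun i j hij => ?_, fun i => ?_, rfl⟩
      · exact (Nat.one_le_div_iff ht).2 (le_trans (hg1 i) (Nat.le_add_right _ _))
      · exact Nat.div_le_div_right (by have := hg2 hij; omega)
      · have h3 := hg3 i
        have hlt : g i + k < (a + (i : ℕ) * b + 1) * t := by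
          have e1 : (a + (i : ℕ) * b + 1) * t = t * (a + (i : ℕ) * b) + t := by ring
          omega
        exact Nat.lt_succ_iff.1 ((Nat.div_lt_iff_lt_mul ht).2 hlt)
    have hsum : ∑ k ∈ Finset.range t, ((t : ℝ)⁻¹) = 1 := by
      rw [Finset.sum_const, Finset.card_range, nsmul_eq_mul]
      exact mul_inv_cancel₀ htR
    have hp : (∑ k ∈ Finset.range t,
        ((t : ℝ)⁻¹) • (fun i : Fin n => (((g i + k) / t : ℕ) : ℝ))) ∈ convexHull ℝ S :=
      (convex_convexHull ℝ S).sum_mem (fun k _ => by positivity) hsum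
        (fun k hk => subset_convexHull ℝ S (hz k hk))
    refine Set.mem_smul_set.2 ⟨_, hp, ?_⟩
    funext i
    have : ((t : ℝ) • ∑ k ∈ Finset.range t,
        ((t : ℝ)⁻¹) • (fun i : Fin n => (((g i + k) / t : ℕ) : ℝ))) i
        = (t : ℝ) * ∑ k ∈ Finset.range t, (t : ℝ)⁻¹ * (((g i + k) / t : ℕ) : ℝ) := by
      simp [Finset.sum_apply, Finset.mul_sum]
    rw [this, ← Finset.mul_sum, ← mul_assoc]
    rw [mul_inv_cancel₀ htR, one_mul]
    rw [← Nat.cast_sum]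
    rw [sumdiv t ht (g i)]

/-- The number of lattice points of the `t`-dilate of `X^w_n(a,b)` is
`(1/n!)·(t(a-1)+1)·(t(a-1+nb)+2)·(t(a-1+nb)+3)⋯(t(a-1+nb)+n)`. -/
theorem stmt_19 (n a b : ℕ) (hn : 0 < n) (ha : 0 < a) (hb : 0 < b) (t : ℕ) :
    n ! * {y : Fin n → ℝ | y ∈ (t : ℝ) • XwPFP n a b ∧ ∀ i, ∃ z : ℤ, y i = (z : ℝ)}.ncard =
      (t * (a - 1) + 1) * ∏ j ∈ Finset.Icc 2 n, (t * (a - 1 + n * b) + j) := by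
  obtain ⟨m, rfl⟩ : ∃ m, n = m + 1 := ⟨n - 1, by omega⟩
  obtain ⟨a', rfl⟩ : ∃ a', a = a' + 1 := ⟨a - 1, by omega⟩
  simp only [Nat.add_sub_cancel]
  set A := t * a' + 1 with hA
  set B := t * b with hB
  have hset : {y : Fin (m+1) → ℝ | y ∈ (t : ℝ) • XwPFP (m+1) (a'+1) b ∧
        ∀ i, ∃ z : ℤ, y i = (z : ℝ)}
      = (fun f : Fin (m+1) → ℕ => fun i => ((f i + t - 1 : ℕ) : ℝ)) '' ↑(par (m+1) A B) := by
    ext y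
    constructor
    · rintro ⟨hy, hyint⟩
      obtain ⟨x, hx, rfl⟩ := Set.mem_smul_set.1 hy
      obtain ⟨hx1, hx2, hx3⟩ := xw_subset _ _ _ hx
      choose z hz using hyint
      have hzpos : ∀ i, 0 ≤ z i := by
        intro i
        have h0 : (0:ℝ) ≤ (t:ℝ) * x i := by
          have := hx1 i
          have := Nat.cast_nonneg (α := ℝ) t
          nlinarith
        have h1 : ((t:ℝ) • x) i = (t:ℝ) * x i := rfl
        rw [← h1, hz i] at h0
        exact_mod_cast h0
      set g : Fin (m+1) → ℕ := fun i => (z i).toNat with hg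
      have hyg : ∀ i, ((t:ℝ) • x) i = (g i : ℝ) := by
        intro i
        rw [hz i]
        have := Int.toNat_of_nonneg (hzpos i)
        exact_mod_cast this.symm
      have hgt : ∀ i, t ≤ g i := by
        intro i
        have : (t:ℝ) ≤ (g i : ℝ) := by
          rw [← hyg i]
          show (t:ℝ) ≤ (t:ℝ) * x i
          nlinarith [hx1 i, Nat.cast_nonneg (α := ℝ) t]
        exact_mod_cast this
      have hgmono : Monotone g := by
        intro i j hij
        have : (g i : ℝ) ≤ (g j : ℝ) := by
          rw [← hyg i, ← hyg j]
          show (t:ℝ) * x i ≤ (t:ℝ) * x j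
          nlinarith [hx2 hij, Nat.cast_nonneg (α := ℝ) t]
        exact_mod_cast this
      have hgu : ∀ i : Fin (m+1), g i ≤ t * ((a'+1) + (i:ℕ) * b) := by
        intro i
        have : (g i : ℝ) ≤ ((t * ((a'+1) + (i:ℕ) * b) : ℕ) : ℝ) := by
          rw [← hyg i]
          show (t:ℝ) * x i ≤ _
          push_cast
          have hx3' := hx3 i
          push_cast at hx3'
          nlinarith [Nat.cast_nonneg (α := ℝ) t, mul_le_mul_of_nonneg_left hx3'
            (Nat.cast_nonneg (α := ℝ) t)]
        exact_mod_cast this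
      refine ⟨fun i => g i + 1 - t, ?_, ?_⟩
      · refine mem_par.2 ⟨fun i => ⟨by have := hgt i; omega, ?_⟩, fun i j hij => ?_⟩
        · have h3 := hgu i
          have e1 : t * ((a'+1) + (i:ℕ) * b) + 1 = A + (i:ℕ) * B + t := by
            rw [hA, hB]; ring
          have := hgt i
          omega
        · have h1 := hgt i
          have h2 := hgt j
          have hm := hgmono hij
          show g i + 1 - t ≤ g j + 1 - t
          omega
      · funext i
        show ((g i + 1 - t + t - 1 : ℕ) : ℝ) = ((t:ℝ) • x) i
        have hgi : g i + 1 - t + t - 1 = g i := by have := hgt i; omega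
        rw [hgi]
        exact (hyg i).symm
    · rintro ⟨f, hf, rfl⟩
      obtain ⟨hb1, hmono⟩ := mem_par.1 hf
      constructor
      · refine mem_dilate (m+1) (a'+1) b t (by omega) (fun i => f i + t - 1)
          (fun i => by have := (hb1 i).1; show t ≤ f i + t - 1; omega)
          (fun i j hij => by have := hmono hij; show f i + t - 1 ≤ f j + t - 1; omega)
          (fun i => ?_)
        have h2 := (hb1 i).2
        have e1 : t * ((a'+1) + (i:ℕ) * b) + 1 = A + (i:ℕ) * B + t := by
          rw [hA, hB]; ring
        show f i + t - 1 ≤ t * ((a'+1) + (i:ℕ) * b)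
        have := (hb1 i).1
        omega
      · intro i
        exact ⟨((f i + t - 1 : ℕ) : ℤ), by push_cast; ring⟩
  rw [hset]
  have hinj : Set.InjOn (fun f : Fin (m+1) → ℕ => fun i => ((f i + t - 1 : ℕ) : ℝ))
      ↑(par (m+1) A B) := by
    intro f hf f' hf' heq
    have hb1 := (mem_par.1 (Finset.mem_coe.1 hf)).1
    have hb1' := (mem_par.1 (Finset.mem_coe.1 hf')).1
    funext i
    have h := congrFun heq i
    have h2 : (f i + t - 1 : ℕ) = (f' i + t - 1 : ℕ) := Nat.cast_injective h
    have := (hb1 i).1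
    have := (hb1' i).1
    omega
  rw [Set.ncard_image_of_injOn hinj, Set.ncard_coe_finset]
  rw [key B m A]
  congr 1
  refine Finset.prod_nbij' (fun k => k + 2) (fun j => j - 2) ?_ ?_ ?_ ?_ ?_
  · intro k hk; simp only [Finset.mem_range] at hk; simp only [Finset.mem_Icc]; omega
  · intro j hj; simp only [Finset.mem_Icc] at hj; simp only [Finset.mem_range]; omega
  · intro k _; show k + 2 - 2 = k; omega
  · intro j hj; simp only [Finset.mem_Icc] at hj; show j - 2 + 2 = j; omega
  · intro k hk
    show A + (m+1) * B + k + 1 = t * (a' + (m+1) * b) + (k + 2)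
    rw [hA, hB]; ring
end
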